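/- arXiv:2303.16699 — 4 statements merged into one kernel-verified Lean document; each statement's English description precedes it below -/
import Mathlib

section
/- HyperLTL satisfiability is in Σ¹₁: under a fixed computable injective encoding of HyperLTL sentences as natural numbers, the set of codes of HyperLTL sentences that have a model (a set of traces satisfying the sentence) is a Σ¹₁ subset of ℕ. -/
/-! ### HyperLTL: syntax and semantics -/

/-- A trace over a set `AP` of atomic propositions. -/
abbrev Trace (AP : Type) : Type := ℕ → Set AP

/-- The suffix of a trace from position `j` onwards. -/
def Trace.shift {AP : Type} (t : Trace AP) (j : ℕ) : Trace AP := fun i => t (i + j)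

/-- Quantifier-free HyperLTL formulas; trace variables are natural numbers. -/
inductive QF (AP : Type) : Type where
  | atom : AP → ℕ → QF AP
  | neg  : QF AP → QF AP
  | disj : QF AP → QF AP → QF AP
  | next : QF AP → QF AP
  | untl : QF AP → QF AP → QF AP

/-- HyperLTL formulas: a block of trace quantifiers followed by a
quantifier-free formula (HyperLTL formulas are in prenex normal form). -/
inductive HFormula (AP : Type) : Type where
  | ex  : ℕ → HFormula AP → HFormula AP
  | all : ℕ → HFormula AP → HFormula AP
  | qf  : QF AP → HFormula AP

/-- The simultaneous shift of a trace assignment. -/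
def shiftAsg {AP : Type} (As : ℕ → Trace AP) (j : ℕ) : ℕ → Trace AP :=
  fun x => Trace.shift (As x) j

/-- Semantics of quantifier-free HyperLTL formulas w.r.t. a trace assignment. -/
def QF.sat {AP : Type} : QF AP → (ℕ → Trace AP) → Prop
  | .atom a x, As => a ∈ As x 0
  | .neg ψ, As => ¬ ψ.sat As
  | .disj ψ₁ ψ₂, As => ψ₁.sat As ∨ ψ₂.sat As
  | .next ψ, As => ψ.sat (shiftAsg As 1)
  | .untl ψ₁ ψ₂, As => ∃ j, ψ₂.sat (shiftAsg As j) ∧ ∀ j' < j, ψ₁.sat (shiftAsg As j')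

/-- Semantics of HyperLTL formulas w.r.t. a set of traces and a trace assignment. -/
def HFormula.sat {AP : Type} : HFormula AP → Set (Trace AP) → (ℕ → Trace AP) → Prop
  | .ex x φ, T, As => ∃ t ∈ T, φ.sat T (Function.update As x t)
  | .all x φ, T, As => ∀ t ∈ T, φ.sat T (Function.update As x t)
  | .qf ψ, _, As => ψ.sat As

def QF.freeVars {AP : Type} : QF AP → Set ℕ
  | .atom _ x => {x}
  | .neg ψ => ψ.freeVars
  | .disj ψ₁ ψ₂ => ψ₁.freeVars ∪ ψ₂.freeVars
  | .next ψ => ψ.freeVars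
  | .untl ψ₁ ψ₂ => ψ₁.freeVars ∪ ψ₂.freeVars

def HFormula.freeVars {AP : Type} : HFormula AP → Set ℕ
  | .ex x φ => φ.freeVars \ {x}
  | .all x φ => φ.freeVars \ {x}
  | .qf ψ => ψ.freeVars

/-- A sentence is a formula without free variables. -/
def HFormula.IsSentence {AP : Type} (φ : HFormula AP) : Prop := φ.freeVars = ∅

/-- `T` is a model of `φ` (for sentences the initial assignment is irrelevant). -/
def HModels {AP : Type} (T : Set (Trace AP)) (φ : HFormula AP) : Prop :=
  φ.sat T (fun _ _ => ∅)

/-- A HyperLTL sentence is satisfiable if it has a model. -/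
def HSatisfiable {AP : Type} (φ : HFormula AP) : Prop := ∃ T, HModels T φ

/-! ### A fixed computable injective encoding of HyperLTL formulas -/

def QF.codeWith {AP : Type} (e : AP → ℕ) : QF AP → ℕ
  | .atom a x => Nat.pair 0 (Nat.pair (e a) x)
  | .neg ψ => Nat.pair 1 (ψ.codeWith e)
  | .disj ψ₁ ψ₂ => Nat.pair 2 (Nat.pair (ψ₁.codeWith e) (ψ₂.codeWith e))
  | .next ψ => Nat.pair 3 (ψ.codeWith e)
  | .untl ψ₁ ψ₂ => Nat.pair 4 (Nat.pair (ψ₁.codeWith e) (ψ₂.codeWith e))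

def HFormula.codeWith {AP : Type} (e : AP → ℕ) : HFormula AP → ℕ
  | .ex x φ => Nat.pair 0 (Nat.pair x (φ.codeWith e))
  | .all x φ => Nat.pair 1 (Nat.pair x (φ.codeWith e))
  | .qf ψ => Nat.pair 2 (ψ.codeWith e)

/-! ### Arithmetic formulas and Σ¹₁ sets -/

/-- Terms of arithmetic (signature 0,1,+,·) with number variables and
applications of (free) type-1 function variables. -/
inductive ATerm : Type where
  | var : ℕ → ATerm
  | zero : ATerm
  | one : ATerm
  | add : ATerm → ATerm → ATerm
  | mul : ATerm → ATerm → ATerm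
  | app : ℕ → ATerm → ATerm

def ATerm.eval : ATerm → (ℕ → ℕ) → (ℕ → ℕ → ℕ) → ℕ
  | .var x, v, _ => v x
  | .zero, _, _ => 0
  | .one, _, _ => 1
  | .add s t, v, F => s.eval v F + t.eval v F
  | .mul s t, v, F => s.eval v F * t.eval v F
  | .app f t, v, F => F f (t.eval v F)

/-- Formulas of arithmetic with arbitrary quantification over natural numbers
(type-0 objects); type-1 function variables occur free, via `ATerm.app`. -/
inductive AForm : Type where
  | eq : ATerm → ATerm → AForm
  | lt : ATerm → ATerm → AForm
  | neg : AForm → AForm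
  | disj : AForm → AForm → AForm
  | exN : ℕ → AForm → AForm
  | allN : ℕ → AForm → AForm

def AForm.sat : AForm → (ℕ → ℕ) → (ℕ → ℕ → ℕ) → Prop
  | .eq s t, v, F => s.eval v F = t.eval v F
  | .lt s t, v, F => s.eval v F < t.eval v F
  | .neg φ, v, F => ¬ φ.sat v F
  | .disj φ ψ, v, F => φ.sat v F ∨ ψ.sat v F
  | .exN x φ, v, F => ∃ n : ℕ, φ.sat (Function.update v x n) F
  | .allN x φ, v, F => ∀ n : ℕ, φ.sat (Function.update v x n) F

/-- A set `N ⊆ ℕ` is Σ¹₁ if it is defined by existential quantification over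
type-1 objects (functions ℕ → ℕ) followed by an arithmetic formula with
arbitrary quantification over natural numbers. -/
def Sigma11 (N : Set ℕ) : Prop :=
  ∃ ψ : AForm, ∀ x : ℕ, x ∈ N ↔ ∃ F : ℕ → ℕ → ℕ, ψ.sat (fun _ => x) F

namespace Sigma11Proof
open Classical

variable {AP : Type}

/-! ### pairing helpers -/

lemma lt_pair_right (t q : ℕ) (h : 1 ≤ t) : q < Nat.pair t q := by
  unfold Nat.pair
  split <;> nlinarith

/-! ### free-variable congruence lemmas -/

theorem qf_sat_congr (ψ : QF AP) : ∀ (As As' : ℕ → Trace AP),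
    (∀ x ∈ ψ.freeVars, As x = As' x) → (QF.sat ψ As ↔ QF.sat ψ As') := by
  induction ψ with
  | atom a x =>
      intro As As' h
      have := h x (by simp [QF.freeVars])
      simp [QF.sat, this]
  | neg ψ ih =>
      intro As As' h; simp only [QF.sat]; rw [ih As As' h]
  | disj ψ₁ ψ₂ ih₁ ih₂ =>
      intro As As' h; simp only [QF.sat]
      rw [ih₁ As As' fun x hx => h x (Set.mem_union_left _ hx),
        ih₂ As As' fun x hx => h x (Set.mem_union_right _ hx)]
  | next ψ ih =>
      intro As As' h; simp only [QF.sat]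
      exact ih _ _ fun x hx => show Trace.shift (As x) 1 = Trace.shift (As' x) 1 by
        rw [h x hx]
  | untl ψ₁ ψ₂ ih₁ ih₂ =>
      intro As As' h; simp only [QF.sat]
      apply exists_congr; intro j
      apply and_congr
      · exact ih₂ _ _ fun x hx => show Trace.shift (As x) j = Trace.shift (As' x) j by
          rw [h x (Set.mem_union_right _ hx)]
      · apply forall_congr'; intro j'; apply imp_congr Iff.rfl
        exact ih₁ _ _ fun x hx => show Trace.shift (As x) j' = Trace.shift (As' x) j' by
          rw [h x (Set.mem_union_left _ hx)]

theorem h_sat_congr (φ : HFormula AP) : ∀ (T : Set (Trace AP)) (As As' : ℕ → Trace AP),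
    (∀ x ∈ φ.freeVars, As x = As' x) → (φ.sat T As ↔ φ.sat T As') := by
  induction φ with
  | ex x φ ih =>
      intro T As As' h
      simp only [HFormula.sat]
      apply exists_congr; intro t; apply and_congr Iff.rfl
      apply ih; intro y hy
      rcases eq_or_ne y x with rfl | hne
      · simp
      · simp only [Function.update_of_ne hne]
        exact h y ⟨hy, hne⟩
  | all x φ ih =>
      intro T As As' h
      simp only [HFormula.sat]
      apply forall_congr'; intro t; apply imp_congr Iff.rfl
      apply ih; intro y hy
      rcases eq_or_ne y x with rfl | hne
      · simp
      · simp only [Function.update_of_ne hne]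
        exact h y ⟨hy, hne⟩
  | qf ψ =>
      intro T As As' h
      exact qf_sat_congr ψ As As' h

/-! ### countable-index satisfaction -/

def CSat (e : ℕ → Trace AP) (D : Set ℕ) : HFormula AP → (ℕ → ℕ) → Prop
  | .ex x φ, g => ∃ k ∈ D, CSat e D φ (Function.update g x k)
  | .all x φ, g => ∀ k ∈ D, CSat e D φ (Function.update g x k)
  | .qf ψ, g => QF.sat ψ (fun y => e (g y))

theorem csat_to_sat (e : ℕ → Trace AP) (D : Set ℕ) (φ : HFormula AP) :
    ∀ (g : ℕ → ℕ) (As : ℕ → Trace AP), CSat e D φ g →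
    (∀ x ∈ φ.freeVars, As x = e (g x)) → φ.sat (e '' D) As := by
  induction φ with
  | ex x φ ih =>
      rintro g As ⟨k, hk, hC⟩ h
      refine ⟨e k, ⟨k, hk, rfl⟩, ih (Function.update g x k) _ hC ?_⟩
      intro y hy
      rcases eq_or_ne y x with rfl | hne
      · simp
      · simp only [Function.update_of_ne hne]
        exact h y ⟨hy, hne⟩
  | all x φ ih =>
      rintro g As hC h t ⟨k, hk, rfl⟩
      refine ih (Function.update g x k) _ (hC k hk) ?_
      intro y hy
      rcases eq_or_ne y x with rfl | hne
      · simp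
      · simp only [Function.update_of_ne hne]
        exact h y ⟨hy, hne⟩
  | qf ψ =>
      intro g As hC h
      exact (qf_sat_congr ψ As _ h).mpr hC

theorem sat_to_csat (e : ℕ → Trace AP) (D : Set ℕ) (φ : HFormula AP) :
    ∀ (g : ℕ → ℕ) (As : ℕ → Trace AP), φ.sat (e '' D) As →
    (∀ x ∈ φ.freeVars, As x = e (g x)) → CSat e D φ g := by
  induction φ with
  | ex x φ ih =>
      rintro g As ⟨t, ⟨k, hk, rfl⟩, hs⟩ h
      refine ⟨k, hk, ih (Function.update g x k) _ hs ?_⟩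
      intro y hy
      rcases eq_or_ne y x with rfl | hne
      · simp
      · simp only [Function.update_of_ne hne]
        exact h y ⟨hy, hne⟩
  | all x φ ih =>
      intro g As hs h k hk
      refine ih (Function.update g x k) _ (hs (e k) ⟨k, hk, rfl⟩) ?_
      intro y hy
      rcases eq_or_ne y x with rfl | hne
      · simp
      · simp only [Function.update_of_ne hne]
        exact h y ⟨hy, hne⟩
  | qf ψ =>
      intro g As hs h
      exact (qf_sat_congr ψ As _ h).mp hs

/-! ### Löwenheim–Skolem: countable models -/

noncomputable def wit (T : Set (Trace AP)) (x : ℕ) (χ : HFormula AP)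
    (As : ℕ → Trace AP) : Trace AP :=
  Classical.epsilon (fun t => t ∈ T ∧ χ.sat T (Function.update As x t))

theorem wit_spec {T : Set (Trace AP)} {x : ℕ} {χ : HFormula AP} {As : ℕ → Trace AP}
    (h : HFormula.sat (.ex x χ) T As) :
    wit T x χ As ∈ T ∧ χ.sat T (Function.update As x (wit T x χ As)) := by
  have h' : ∃ t, t ∈ T ∧ χ.sat T (Function.update As x t) := h
  exact Classical.epsilon_spec h'

inductive Reach (T : Set (Trace AP)) (As₀ : ℕ → Trace AP) (φ₀ : HFormula AP) :
    HFormula AP → (ℕ → Trace AP) → Prop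
  | base : Reach T As₀ φ₀ φ₀ As₀
  | exs {x χ As} : Reach T As₀ φ₀ (.ex x χ) As → HFormula.sat (.ex x χ) T As →
      Reach T As₀ φ₀ χ (Function.update As x (wit T x χ As))
  | alls {x χ As y χ' As'} : Reach T As₀ φ₀ (.all x χ) As →
      Reach T As₀ φ₀ (.ex y χ') As' → HFormula.sat (.ex y χ') T As' →
      Reach T As₀ φ₀ χ (Function.update As x (wit T y χ' As'))

def Hull (T : Set (Trace AP)) (As₀ : ℕ → Trace AP) (φ₀ : HFormula AP) : Set (Trace AP) :=
  {t | ∃ y χ' As', Reach T As₀ φ₀ (.ex y χ') As' ∧ HFormula.sat (.ex y χ') T As' ∧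
    t = wit T y χ' As'}

theorem hull_countable (T : Set (Trace AP)) (As₀ : ℕ → Trace AP) (φ₀ : HFormula AP) :
    (Hull T As₀ φ₀).Countable := by
  classical
  set P := HFormula AP × (ℕ → Trace AP)
  let stepE : P → P := fun p => match p with
    | (.ex x χ, As) => (χ, Function.update As x (wit T x χ As))
    | p => p
  let stepA : P × P → P := fun pq => match pq with
    | ((.all x χ, As), (.ex y χ', As')) => (χ, Function.update As x (wit T y χ' As'))
    | (p, _) => p
  let St : ℕ → Set P := fun n => Nat.rec ({(φ₀, As₀)} : Set P)
    (fun _ S => S ∪ stepE '' S ∪ stepA '' (S ×ˢ S)) n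
  have hStS : ∀ n, St (n+1) = St n ∪ stepE '' St n ∪ stepA '' (St n ×ˢ St n) := fun n => rfl
  have hcnt : ∀ n, (St n).Countable := by
    intro n; induction n with
    | zero => exact Set.countable_singleton _
    | succ n ih =>
        rw [hStS]
        exact ((ih.union (ih.image _)).union ((ih.prod ih).image _))
  have hmono : ∀ n m, n ≤ m → St n ⊆ St m := by
    intro n m h
    induction h with
    | refl => exact subset_rfl
    | step _ ih => exact ih.trans (by rw [hStS]; intro p hp; exact Or.inl (Or.inl hp))
  have hreach : ∀ χ As, Reach T As₀ φ₀ χ As → ∃ n, (χ, As) ∈ St n := by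
    intro χ As h
    induction h with
    | base => exact ⟨0, rfl⟩
    | exs h hs ih =>
        obtain ⟨n, hn⟩ := ih
        exact ⟨n+1, by rw [hStS]; exact Or.inl (Or.inr ⟨_, hn, rfl⟩)⟩
    | alls h h' hs ih ih' =>
        obtain ⟨n, hn⟩ := ih
        obtain ⟨n', hn'⟩ := ih'
        refine ⟨max n n' + 1, by
          rw [hStS]
          exact Or.inr ⟨(_, _), ⟨hmono n _ (le_max_left _ _) hn,
            hmono n' _ (le_max_right _ _) hn'⟩, rfl⟩⟩
  let witMap : P → Trace AP := fun p => match p with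
    | (.ex y χ', As') => wit T y χ' As'
    | _ => fun _ => ∅
  have hsub : Hull T As₀ φ₀ ⊆ witMap '' (⋃ n, St n) := by
    rintro t ⟨y, χ', As', hR, hs, rfl⟩
    obtain ⟨n, hn⟩ := hreach _ _ hR
    exact ⟨(.ex y χ', As'), Set.mem_iUnion.mpr ⟨n, hn⟩, rfl⟩
  exact Set.Countable.mono hsub ((Set.countable_iUnion hcnt).image _)

theorem reach_sat_hull {T : Set (Trace AP)} {As₀ : ℕ → Trace AP} {φ₀ : HFormula AP}
    (χ : HFormula AP) : ∀ As, Reach T As₀ φ₀ χ As → χ.sat T As →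
    χ.sat (Hull T As₀ φ₀) As := by
  induction χ with
  | ex x χ ih =>
      intro As hR hs
      obtain ⟨hwT, hws⟩ := wit_spec hs
      exact ⟨wit T x χ As, ⟨x, χ, As, hR, hs, rfl⟩, ih _ (Reach.exs hR hs) hws⟩
  | all x χ ih =>
      intro As hR hs t ht
      obtain ⟨y, χ', As', hR', hs', rfl⟩ := ht
      have htT : wit T y χ' As' ∈ T := (wit_spec hs').1
      exact ih _ (Reach.alls hR hR' hs') (hs _ htT)
  | qf ψ =>
      intro As _ hs
      exact hs

theorem countable_model {φ : HFormula AP} {T : Set (Trace AP)} {As₀ : ℕ → Trace AP}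
    (h : φ.sat T As₀) : ∃ T' : Set (Trace AP), T'.Countable ∧ φ.sat T' As₀ :=
  ⟨Hull T As₀ φ, hull_countable T As₀ φ, reach_sat_hull φ As₀ Reach.base h⟩

end Sigma11Proof
namespace Sigma11Proof

/-! ### a term-definable pairing function, and decoding of `Nat.pair` -/

/-- Term-definable injective pairing: `pr a b = (a+b)^2 + a`. -/
def pr (a b : ℕ) : ℕ := (a + b) * (a + b) + a

lemma pr_sqrt (a b : ℕ) : (pr a b).sqrt = a + b :=
  Nat.sqrt_add_eq _ (by omega)

def upr1 (p : ℕ) : ℕ := p - p.sqrt * p.sqrt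
def upr2 (p : ℕ) : ℕ := p.sqrt - upr1 p

@[simp] lemma upr1_pr (a b : ℕ) : upr1 (pr a b) = a := by
  rw [upr1, pr_sqrt, pr, Nat.add_sub_cancel_left]

@[simp] lemma upr2_pr (a b : ℕ) : upr2 (pr a b) = b := by
  rw [upr2, upr1_pr, pr_sqrt]; omega

lemma pair_zero_eq {q : ℕ} (h : 1 ≤ q) : Nat.pair 0 q = q * q := by
  unfold Nat.pair; rw [if_pos (by omega : 0 < q)]; omega

lemma pair_one_eq {q : ℕ} (h : 2 ≤ q) : Nat.pair 1 q = q * q + 1 := by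
  unfold Nat.pair; rw [if_pos (by omega : 1 < q)]

lemma lt_pair_right' (t q : ℕ) (h : 1 ≤ t) : q < Nat.pair t q := by
  unfold Nat.pair
  split <;> nlinarith

lemma unpair_snd_lt {c : ℕ} (h : 1 ≤ (Nat.unpair c).1) : (Nat.unpair c).2 < c := by
  conv_rhs => rw [← Nat.pair_unpair c]
  exact lt_pair_right' _ _ h

lemma unpair_unpair_fst_lt {c : ℕ} (h : 1 ≤ (Nat.unpair c).1) :
    (Nat.unpair (Nat.unpair c).2).1 < c :=
  lt_of_le_of_lt (Nat.unpair_left_le _) (unpair_snd_lt h)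

lemma unpair_unpair_snd_lt {c : ℕ} (h : 1 ≤ (Nat.unpair c).1) :
    (Nat.unpair (Nat.unpair c).2).2 < c :=
  lt_of_le_of_lt (Nat.unpair_right_le _) (unpair_snd_lt h)

lemma pair_zero_ge_two {c : ℕ} (hc : 2 ≤ c) (h : (Nat.unpair c).1 = 0) :
    2 ≤ (Nat.unpair c).2 ∧ c = (Nat.unpair c).2 * (Nat.unpair c).2 := by
  have hp := Nat.pair_unpair c
  rw [h] at hp
  have hq1 : 1 ≤ (Nat.unpair c).2 := by
    by_contra hq
    have : (Nat.unpair c).2 = 0 := by omega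
    rw [this] at hp
    simp [Nat.pair] at hp
    omega
  have hval : c = (Nat.unpair c).2 * (Nat.unpair c).2 := by
    conv_lhs => rw [← hp, pair_zero_eq hq1]
  have hq2 : 2 ≤ (Nat.unpair c).2 := by
    by_contra hq
    have : (Nat.unpair c).2 = 1 := by omega
    rw [this] at hval
    omega
  exact ⟨hq2, hval⟩

lemma pair_zero_sub_lt {c : ℕ} (hc : 2 ≤ c) (h : (Nat.unpair c).1 = 0) :
    (Nat.unpair (Nat.unpair c).2).2 < c := by
  obtain ⟨hq, hcq⟩ := pair_zero_ge_two hc h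
  calc (Nat.unpair (Nat.unpair c).2).2 ≤ (Nat.unpair c).2 := Nat.unpair_right_le _
  _ < c := by nlinarith

/-! ### assignment codes: finite-map lookup -/

/-- Code of extending assignment-code `g` by `x ↦ k`. -/
def cns (x k g : ℕ) : ℕ := Nat.pair (Nat.pair x k) g + 1

noncomputable def Lfun : ℕ → ℕ → ℕ
  | 0, _ => 0
  | (g + 1), y =>
      if y = (Nat.unpair (Nat.unpair g).1).1 then (Nat.unpair (Nat.unpair g).1).2
      else Lfun (Nat.unpair g).2 y
  termination_by g => g
  decreasing_by
    exact Nat.lt_succ_of_le (Nat.unpair_right_le _)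

@[simp] lemma Lfun_zero (y : ℕ) : Lfun 0 y = 0 := by rw [Lfun]

lemma Lfun_cns (x k g y : ℕ) : Lfun (cns x k g) y = if y = x then k else Lfun g y := by
  rw [cns, Lfun]
  simp [Nat.unpair_pair]

/-- any positive number is a `cns`. -/
lemma eq_cns (g : ℕ) (h : g ≠ 0) :
    g = cns (Nat.unpair (Nat.unpair (g-1)).1).1 (Nat.unpair (Nat.unpair (g-1)).1).2
          (Nat.unpair (g-1)).2 := by
  rw [cns, Nat.pair_unpair, Nat.pair_unpair]
  omega

/-! ### sizes of formula codes -/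

lemma six_le_codeh {AP : Type} (e : AP → ℕ) (φ : HFormula AP) :
    6 ≤ HFormula.codeWith e φ := by
  induction φ with
  | ex x φ ih =>
      show 6 ≤ Nat.pair 0 (Nat.pair x (HFormula.codeWith e φ))
      set q := Nat.pair x (HFormula.codeWith e φ) with hqdef
      have h1 : 6 ≤ q := le_trans ih (Nat.right_le_pair _ _)
      rw [pair_zero_eq (by omega)]
      nlinarith
  | all x φ ih =>
      show 6 ≤ Nat.pair 1 (Nat.pair x (HFormula.codeWith e φ))
      set q := Nat.pair x (HFormula.codeWith e φ) with hqdef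
      have h1 : 6 ≤ q := le_trans ih (Nat.right_le_pair _ _)
      rw [pair_one_eq (by omega)]
      nlinarith
  | qf ψ =>
      show 6 ≤ Nat.pair 2 (QF.codeWith e ψ)
      unfold Nat.pair
      split <;> nlinarith

lemma codeh_ex_sub_lt {AP : Type} (e : AP → ℕ) (x : ℕ) (φ : HFormula AP) :
    HFormula.codeWith e φ < HFormula.codeWith e (.ex x φ) := by
  show HFormula.codeWith e φ < Nat.pair 0 (Nat.pair x (HFormula.codeWith e φ))
  have h6 := six_le_codeh e φ
  set q := Nat.pair x (HFormula.codeWith e φ) with hqdef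
  have h1 : 6 ≤ q := le_trans h6 (Nat.right_le_pair _ _)
  have h2 : HFormula.codeWith e φ ≤ q := Nat.right_le_pair _ _
  rw [pair_zero_eq (by omega)]
  nlinarith

end Sigma11Proof
namespace Sigma11Proof

/-! ### the clause systems pinning down the guessed functions

Slots: 0 = traces, 1 = lookup, 2 = QF-truth, 3 = formula-truth,
4 = QF-validity, 5 = formula-validity, 6 = domain. -/

def LCl (F : ℕ → ℕ → ℕ) : Prop :=
  (∀ y, F 1 (pr 0 y) = 0) ∧
  (∀ x k g y, F 1 (pr (cns x k g) y) = if y = x then k else F 1 (pr g y))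

def SCl (F : ℕ → ℕ → ℕ) : Prop :=
  (∀ a x g j, F 2 (pr (Nat.pair 0 (Nat.pair a x)) (pr g j)) = 1 ↔
      F 0 (pr (F 1 (pr g x)) (pr j a)) = 1) ∧
  (∀ c g j, F 2 (pr (Nat.pair 1 c) (pr g j)) = 1 ↔ ¬ F 2 (pr c (pr g j)) = 1) ∧
  (∀ c₁ c₂ g j, F 2 (pr (Nat.pair 2 (Nat.pair c₁ c₂)) (pr g j)) = 1 ↔
      (F 2 (pr c₁ (pr g j)) = 1 ∨ F 2 (pr c₂ (pr g j)) = 1)) ∧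
  (∀ c g j, F 2 (pr (Nat.pair 3 c) (pr g j)) = 1 ↔ F 2 (pr c (pr g (j+1))) = 1) ∧
  (∀ c₁ c₂ g j, F 2 (pr (Nat.pair 4 (Nat.pair c₁ c₂)) (pr g j)) = 1 ↔
      (∃ k, F 2 (pr c₂ (pr g (k + j))) = 1 ∧ ∀ k' < k, F 2 (pr c₁ (pr g (k' + j))) = 1))

def PCl (F : ℕ → ℕ → ℕ) : Prop :=
  (∀ x c g, F 3 (pr (Nat.pair 0 (Nat.pair x c)) g) = 1 ↔
      (∃ k, F 6 k = 1 ∧ F 3 (pr c (cns x k g)) = 1)) ∧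
  (∀ x c g, F 3 (pr (Nat.pair 1 (Nat.pair x c)) g) = 1 ↔
      (∀ k, F 6 k = 1 → F 3 (pr c (cns x k g)) = 1)) ∧
  (∀ c g, F 3 (pr (Nat.pair 2 c) g) = 1 ↔ F 2 (pr c (pr g 0)) = 1)

def QCl (m : ℕ) (F : ℕ → ℕ → ℕ) : Prop :=
  ∀ c B, F 4 (pr c B) = 1 ↔
    ((∃ a x, c = Nat.pair 0 (Nat.pair a x) ∧ a < m ∧ F 1 (pr B x) = 1) ∨
     (∃ c', c = Nat.pair 1 c' ∧ F 4 (pr c' B) = 1) ∨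
     (∃ c₁ c₂, c = Nat.pair 2 (Nat.pair c₁ c₂) ∧ F 4 (pr c₁ B) = 1 ∧ F 4 (pr c₂ B) = 1) ∨
     (∃ c', c = Nat.pair 3 c' ∧ F 4 (pr c' B) = 1) ∨
     (∃ c₁ c₂, c = Nat.pair 4 (Nat.pair c₁ c₂) ∧ F 4 (pr c₁ B) = 1 ∧ F 4 (pr c₂ B) = 1))

def HCl (F : ℕ → ℕ → ℕ) : Prop :=
  ∀ c B, F 5 (pr c B) = 1 ↔
    ((∃ x c', c = Nat.pair 0 (Nat.pair x c') ∧ c' < c ∧ F 5 (pr c' (cns x 1 B)) = 1) ∨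
     (∃ x c', c = Nat.pair 1 (Nat.pair x c') ∧ F 5 (pr c' (cns x 1 B)) = 1) ∨
     (∃ c', c = Nat.pair 2 c' ∧ F 4 (pr c' B) = 1))

def Clauses (m : ℕ) (F : ℕ → ℕ → ℕ) : Prop := LCl F ∧ SCl F ∧ PCl F ∧ QCl m F ∧ HCl F

/-! ### trace family and domain decoded from a guessed `F` -/

def eF (F : ℕ → ℕ → ℕ) (m : ℕ) : ℕ → Trace (Fin m) :=
  fun k i => {a : Fin m | F 0 (pr k (pr i a.val)) = 1}

def DF (F : ℕ → ℕ → ℕ) : Set ℕ := {k | F 6 k = 1}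

/-! ### canonical functions realizing the clauses -/

open Classical in
noncomputable def Afun {m : ℕ} (e : ℕ → Trace (Fin m)) : ℕ → ℕ :=
  fun p =>
    if h : upr2 (upr2 p) < m then
      (if (⟨upr2 (upr2 p), h⟩ : Fin m) ∈ e (upr1 p) (upr1 (upr2 p)) then 1 else 0)
    else 0

open Classical in
noncomputable def Sfun {m : ℕ} (e : ℕ → Trace (Fin m)) (c g j : ℕ) : ℕ :=
  if (Nat.unpair c).1 = 0 then
    Afun e (pr (Lfun g (Nat.unpair (Nat.unpair c).2).2)
      (pr j (Nat.unpair (Nat.unpair c).2).1))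
  else if h1 : (Nat.unpair c).1 = 1 then
    (if Sfun e (Nat.unpair c).2 g j = 1 then 0 else 1)
  else if h2 : (Nat.unpair c).1 = 2 then
    (if Sfun e (Nat.unpair (Nat.unpair c).2).1 g j = 1 ∨
        Sfun e (Nat.unpair (Nat.unpair c).2).2 g j = 1 then 1 else 0)
  else if h3 : (Nat.unpair c).1 = 3 then Sfun e (Nat.unpair c).2 g (j+1)
  else if h4 : (Nat.unpair c).1 = 4 then
    (if ∃ k, Sfun e (Nat.unpair (Nat.unpair c).2).2 g (k + j) = 1 ∧
        ∀ k' < k, Sfun e (Nat.unpair (Nat.unpair c).2).1 g (k' + j) = 1 then 1 else 0)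
  else 0
  termination_by c
  decreasing_by all_goals
    first
    | exact hlt
    | exact pair_zero_sub_lt (by omega) h0
    | exact unpair_snd_lt (by omega)
    | exact unpair_unpair_fst_lt (by omega)
    | exact unpair_unpair_snd_lt (by omega)

open Classical in
noncomputable def Pfun {m : ℕ} (e : ℕ → Trace (Fin m)) (D : Set ℕ) (c g : ℕ) : ℕ :=
  if hc : c ≤ 1 then 0
  else if h0 : (Nat.unpair c).1 = 0 then
    (if ∃ k, k ∈ D ∧
        Pfun e D (Nat.unpair (Nat.unpair c).2).2
          (cns (Nat.unpair (Nat.unpair c).2).1 k g) = 1 then 1 else 0)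
  else if h1 : (Nat.unpair c).1 = 1 then
    (if ∀ k, k ∈ D →
        Pfun e D (Nat.unpair (Nat.unpair c).2).2
          (cns (Nat.unpair (Nat.unpair c).2).1 k g) = 1 then 1 else 0)
  else if h2 : (Nat.unpair c).1 = 2 then (if Sfun e (Nat.unpair c).2 g 0 = 1 then 1 else 0)
  else 0
  termination_by c
  decreasing_by all_goals
    first
    | exact hlt
    | exact pair_zero_sub_lt (by omega) h0
    | exact unpair_snd_lt (by omega)
    | exact unpair_unpair_fst_lt (by omega)
    | exact unpair_unpair_snd_lt (by omega)

open Classical in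
noncomputable def Qfun (m : ℕ) (c B : ℕ) : ℕ :=
  if h0 : (Nat.unpair c).1 = 0 then
    (if (Nat.unpair (Nat.unpair c).2).1 < m ∧
        Lfun B (Nat.unpair (Nat.unpair c).2).2 = 1 then 1 else 0)
  else if h1 : (Nat.unpair c).1 = 1 then
    (if Qfun m (Nat.unpair c).2 B = 1 then 1 else 0)
  else if h2 : (Nat.unpair c).1 = 2 then
    (if Qfun m (Nat.unpair (Nat.unpair c).2).1 B = 1 ∧
        Qfun m (Nat.unpair (Nat.unpair c).2).2 B = 1 then 1 else 0)
  else if h3 : (Nat.unpair c).1 = 3 then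
    (if Qfun m (Nat.unpair c).2 B = 1 then 1 else 0)
  else if h4 : (Nat.unpair c).1 = 4 then
    (if Qfun m (Nat.unpair (Nat.unpair c).2).1 B = 1 ∧
        Qfun m (Nat.unpair (Nat.unpair c).2).2 B = 1 then 1 else 0)
  else 0
  termination_by c
  decreasing_by all_goals
    first
    | exact hlt
    | exact pair_zero_sub_lt (by omega) h0
    | exact unpair_snd_lt (by omega)
    | exact unpair_unpair_fst_lt (by omega)
    | exact unpair_unpair_snd_lt (by omega)

open Classical in
noncomputable def Hfun (m : ℕ) (c B : ℕ) : ℕ :=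
  if h0 : (Nat.unpair c).1 = 0 then
    (if hlt : (Nat.unpair (Nat.unpair c).2).2 < c then
      (if Hfun m (Nat.unpair (Nat.unpair c).2).2
          (cns (Nat.unpair (Nat.unpair c).2).1 1 B) = 1 then 1 else 0)
     else 0)
  else if h1 : (Nat.unpair c).1 = 1 then
    (if Hfun m (Nat.unpair (Nat.unpair c).2).2
        (cns (Nat.unpair (Nat.unpair c).2).1 1 B) = 1 then 1 else 0)
  else if h2 : (Nat.unpair c).1 = 2 then
    (if Qfun m (Nat.unpair c).2 B = 1 then 1 else 0)
  else 0
  termination_by c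
  decreasing_by all_goals
    first
    | exact hlt
    | exact pair_zero_sub_lt (by omega) h0
    | exact unpair_snd_lt (by omega)
    | exact unpair_unpair_fst_lt (by omega)
    | exact unpair_unpair_snd_lt (by omega)

open Classical in
noncomputable def Fbuild (m : ℕ) (e : ℕ → Trace (Fin m)) (D : Set ℕ) : ℕ → ℕ → ℕ :=
  fun s p => match s with
  | 0 => Afun e p
  | 1 => Lfun (upr1 p) (upr2 p)
  | 2 => Sfun e (upr1 p) (upr1 (upr2 p)) (upr2 (upr2 p))
  | 3 => Pfun e D (upr1 p) (upr2 p)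
  | 4 => Qfun m (upr1 p) (upr2 p)
  | 5 => Hfun m (upr1 p) (upr2 p)
  | 6 => if p ∈ D then 1 else 0
  | _ => 0

end Sigma11Proof
namespace Sigma11Proof
open Classical

lemma ite_one_zero_eq_one {A : Prop} [Decidable A] : (if A then (1:ℕ) else 0) = 1 ↔ A := by
  split <;> simp [*]

variable {m : ℕ} {e : ℕ → Trace (Fin m)} {D : Set ℕ}

/-! ### equation lemmas -/

lemma Sfun_atom (a x g j : ℕ) :
    Sfun e (Nat.pair 0 (Nat.pair a x)) g j = Afun e (pr (Lfun g x) (pr j a)) := by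
  rw [Sfun]; simp [Nat.unpair_pair]

lemma Sfun_neg (c g j : ℕ) :
    Sfun e (Nat.pair 1 c) g j = if Sfun e c g j = 1 then 0 else 1 := by
  rw [Sfun]; simp [Nat.unpair_pair]

lemma Sfun_disj (c₁ c₂ g j : ℕ) :
    Sfun e (Nat.pair 2 (Nat.pair c₁ c₂)) g j =
      if Sfun e c₁ g j = 1 ∨ Sfun e c₂ g j = 1 then 1 else 0 := by
  rw [Sfun]; simp [Nat.unpair_pair]

lemma Sfun_next (c g j : ℕ) :
    Sfun e (Nat.pair 3 c) g j = Sfun e c g (j+1) := by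
  rw [Sfun]; simp [Nat.unpair_pair]

lemma Sfun_untl (c₁ c₂ g j : ℕ) :
    Sfun e (Nat.pair 4 (Nat.pair c₁ c₂)) g j =
      if ∃ k, Sfun e c₂ g (k + j) = 1 ∧ ∀ k' < k, Sfun e c₁ g (k' + j) = 1
      then 1 else 0 := by
  rw [Sfun]; simp [Nat.unpair_pair]

lemma Pfun_le_one {c : ℕ} (hc : c ≤ 1) (g : ℕ) : Pfun e D c g = 0 := by
  rw [Pfun]; simp [hc]

lemma pair_one_ge_two (q : ℕ) : 2 ≤ Nat.pair 1 q := by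
  unfold Nat.pair; split <;> nlinarith

lemma pair_two_ge_two (q : ℕ) : 2 ≤ Nat.pair 2 q := by
  unfold Nat.pair; split <;> nlinarith

lemma Pfun_ex_iff (x c g : ℕ) :
    Pfun e D (Nat.pair 0 (Nat.pair x c)) g = 1 ↔
      ∃ k, k ∈ D ∧ Pfun e D c (cns x k g) = 1 := by
  by_cases hn : Nat.pair 0 (Nat.pair x c) ≤ 1
  · have hcc : c ≤ 1 :=
      le_trans (Nat.right_le_pair _ _) (le_trans (Nat.right_le_pair _ _) hn)
    rw [Pfun_le_one hn]
    simp only [Pfun_le_one hcc]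
    simp
  · rw [Pfun, dif_neg hn]
    simp [Nat.unpair_pair, ite_one_zero_eq_one]

lemma Pfun_all_iff (x c g : ℕ) :
    Pfun e D (Nat.pair 1 (Nat.pair x c)) g = 1 ↔
      ∀ k, k ∈ D → Pfun e D c (cns x k g) = 1 := by
  have hn : ¬ Nat.pair 1 (Nat.pair x c) ≤ 1 := by
    have := pair_one_ge_two (Nat.pair x c); omega
  rw [Pfun, dif_neg hn]
  simp [Nat.unpair_pair, ite_one_zero_eq_one]

lemma Pfun_qf_iff (c g : ℕ) :
    Pfun e D (Nat.pair 2 c) g = 1 ↔ Sfun e c g 0 = 1 := by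
  have hn : ¬ Nat.pair 2 c ≤ 1 := by
    have := pair_two_ge_two c; omega
  rw [Pfun, dif_neg hn]
  simp [Nat.unpair_pair, ite_one_zero_eq_one]

/-! ### the canonical functions satisfy the clause systems -/

lemma Qfun_eq_one_iff (m c B : ℕ) : Qfun m c B = 1 ↔
    ((∃ a x, c = Nat.pair 0 (Nat.pair a x) ∧ a < m ∧ Lfun B x = 1) ∨
     (∃ c', c = Nat.pair 1 c' ∧ Qfun m c' B = 1) ∨
     (∃ c₁ c₂, c = Nat.pair 2 (Nat.pair c₁ c₂) ∧ Qfun m c₁ B = 1 ∧ Qfun m c₂ B = 1) ∨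
     (∃ c', c = Nat.pair 3 c' ∧ Qfun m c' B = 1) ∨
     (∃ c₁ c₂, c = Nat.pair 4 (Nat.pair c₁ c₂) ∧ Qfun m c₁ B = 1 ∧ Qfun m c₂ B = 1)) := by
  constructor
  · intro h
    have hc : c = Nat.pair (Nat.unpair c).1
        (Nat.pair (Nat.unpair (Nat.unpair c).2).1 (Nat.unpair (Nat.unpair c).2).2) := by
      rw [Nat.pair_unpair, Nat.pair_unpair]
    have hc' : c = Nat.pair (Nat.unpair c).1 (Nat.unpair c).2 := (Nat.pair_unpair c).symm
    rw [Qfun] at h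
    by_cases h0 : (Nat.unpair c).1 = 0
    · rw [dif_pos h0, ite_one_zero_eq_one] at h
      rw [h0] at hc
      exact Or.inl ⟨_, _, hc, h⟩
    rw [dif_neg h0] at h
    by_cases h1 : (Nat.unpair c).1 = 1
    · rw [dif_pos h1, ite_one_zero_eq_one] at h
      rw [h1] at hc'
      exact Or.inr (Or.inl ⟨_, hc', h⟩)
    rw [dif_neg h1] at h
    by_cases h2 : (Nat.unpair c).1 = 2
    · rw [dif_pos h2, ite_one_zero_eq_one] at h
      rw [h2] at hc
      exact Or.inr (Or.inr (Or.inl ⟨_, _, hc, h.1, h.2⟩))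
    rw [dif_neg h2] at h
    by_cases h3 : (Nat.unpair c).1 = 3
    · rw [dif_pos h3, ite_one_zero_eq_one] at h
      rw [h3] at hc'
      exact Or.inr (Or.inr (Or.inr (Or.inl ⟨_, hc', h⟩)))
    rw [dif_neg h3] at h
    by_cases h4 : (Nat.unpair c).1 = 4
    · rw [dif_pos h4, ite_one_zero_eq_one] at h
      rw [h4] at hc
      exact Or.inr (Or.inr (Or.inr (Or.inr ⟨_, _, hc, h.1, h.2⟩)))
    rw [dif_neg h4] at h
    exact absurd h (by omega)
  · rintro (⟨a, x, rfl, ham, hx⟩ | ⟨c', rfl, h⟩ | ⟨c₁, c₂, rfl, h₁, h₂⟩ |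
      ⟨c', rfl, h⟩ | ⟨c₁, c₂, rfl, h₁, h₂⟩) <;>
    · rw [Qfun]; simp [Nat.unpair_pair, ite_one_zero_eq_one, *]

lemma Hfun_eq_one_iff (m c B : ℕ) : Hfun m c B = 1 ↔
    ((∃ x c', c = Nat.pair 0 (Nat.pair x c') ∧ c' < c ∧ Hfun m c' (cns x 1 B) = 1) ∨
     (∃ x c', c = Nat.pair 1 (Nat.pair x c') ∧ Hfun m c' (cns x 1 B) = 1) ∨
     (∃ c', c = Nat.pair 2 c' ∧ Qfun m c' B = 1)) := by
  constructor
  · intro h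
    have hc : c = Nat.pair (Nat.unpair c).1
        (Nat.pair (Nat.unpair (Nat.unpair c).2).1 (Nat.unpair (Nat.unpair c).2).2) := by
      rw [Nat.pair_unpair, Nat.pair_unpair]
    have hc' : c = Nat.pair (Nat.unpair c).1 (Nat.unpair c).2 := (Nat.pair_unpair c).symm
    rw [Hfun] at h
    by_cases h0 : (Nat.unpair c).1 = 0
    · rw [dif_pos h0] at h
      by_cases hlt : (Nat.unpair (Nat.unpair c).2).2 < c
      · rw [dif_pos hlt, ite_one_zero_eq_one] at h
        rw [h0] at hc
        exact Or.inl ⟨_, _, hc, hlt, h⟩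
      · rw [dif_neg hlt] at h
        exact absurd h (by omega)
    rw [dif_neg h0] at h
    by_cases h1 : (Nat.unpair c).1 = 1
    · rw [dif_pos h1, ite_one_zero_eq_one] at h
      rw [h1] at hc
      exact Or.inr (Or.inl ⟨_, _, hc, h⟩)
    rw [dif_neg h1] at h
    by_cases h2 : (Nat.unpair c).1 = 2
    · rw [dif_pos h2, ite_one_zero_eq_one] at h
      rw [h2] at hc'
      exact Or.inr (Or.inr ⟨_, hc', h⟩)
    rw [dif_neg h2] at h
    exact absurd h (by omega)
  · rintro (⟨x, c', rfl, hlt, h⟩ | ⟨x, c', rfl, h⟩ | ⟨c', rfl, h⟩) <;>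
    · rw [Hfun]
      simp [Nat.unpair_pair, ite_one_zero_eq_one, *]

theorem canonical_clauses (m : ℕ) (e : ℕ → Trace (Fin m)) (D : Set ℕ) :
    Clauses m (Fbuild m e D) := by
  refine ⟨⟨?_, ?_⟩, ⟨?_, ?_, ?_, ?_, ?_⟩, ⟨?_, ?_, ?_⟩, ?_, ?_⟩
  · intro y; simp [Fbuild]
  · intro x k g y; simp only [Fbuild, upr1_pr, upr2_pr]; exact Lfun_cns x k g y
  · intro a x g j
    simp only [Fbuild, upr1_pr, upr2_pr]
    rw [Sfun_atom]
  · intro c g j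
    simp only [Fbuild, upr1_pr, upr2_pr]
    rw [Sfun_neg]
    split <;> simp [*]
  · intro c₁ c₂ g j
    simp only [Fbuild, upr1_pr, upr2_pr]
    rw [Sfun_disj, ite_one_zero_eq_one]
  · intro c g j
    simp only [Fbuild, upr1_pr, upr2_pr]
    rw [Sfun_next]
  · intro c₁ c₂ g j
    simp only [Fbuild, upr1_pr, upr2_pr]
    rw [Sfun_untl, ite_one_zero_eq_one]
  · intro x c g
    simp only [Fbuild, upr1_pr, upr2_pr]
    rw [Pfun_ex_iff]
    exact exists_congr fun k => and_congr ite_one_zero_eq_one.symm Iff.rfl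
  · intro x c g
    simp only [Fbuild, upr1_pr, upr2_pr]
    rw [Pfun_all_iff]
    exact forall_congr' fun k => imp_congr ite_one_zero_eq_one.symm Iff.rfl
  · intro c g
    simp only [Fbuild, upr1_pr, upr2_pr]
    rw [Pfun_qf_iff]
  · intro c B
    simp only [Fbuild, upr1_pr, upr2_pr]
    exact Qfun_eq_one_iff m c B
  · intro c B
    simp only [Fbuild, upr1_pr, upr2_pr]
    exact Hfun_eq_one_iff m c B

/-! ### recovery of the trace family and domain -/

lemma eF_Fbuild (m : ℕ) (e : ℕ → Trace (Fin m)) (D : Set ℕ) :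
    eF (Fbuild m e D) m = e := by
  funext k i
  ext a
  simp only [eF, Set.mem_setOf_eq, Fbuild, Afun, upr1_pr, upr2_pr]
  rw [dif_pos a.isLt]
  simp [Fin.eta, ite_one_zero_eq_one]

lemma DF_Fbuild (m : ℕ) (e : ℕ → Trace (Fin m)) (D : Set ℕ) :
    DF (Fbuild m e D) = D := by
  ext k
  simp [DF, Fbuild, ite_one_zero_eq_one]

end Sigma11Proof
namespace Sigma11Proof

theorem L_eq {F : ℕ → ℕ → ℕ} (hL : LCl F) : ∀ g y, F 1 (pr g y) = Lfun g y := by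
  intro g
  induction g using Nat.strong_induction_on with
  | _ g ih =>
    intro y
    rcases Nat.eq_zero_or_pos g with rfl | hg
    · rw [hL.1 y, Lfun_zero]
    · have hgc := eq_cns g (by omega)
      have hlt : (Nat.unpair (g-1)).2 < g := by
        have := Nat.unpair_right_le (g-1); omega
      conv_lhs => rw [hgc]
      conv_rhs => rw [hgc]
      rw [hL.2, Lfun_cns]
      by_cases hyx : y = (Nat.unpair (Nat.unpair (g-1)).1).1
      · rw [if_pos hyx, if_pos hyx]
      · rw [if_neg hyx, if_neg hyx, ih _ hlt y]

lemma shiftAsg_shiftAsg {AP : Type} (As : ℕ → Trace AP) (i j : ℕ) :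
    shiftAsg (shiftAsg As j) i = shiftAsg As (i + j) := by
  funext x n
  simp [shiftAsg, Trace.shift, Nat.add_assoc]

lemma shiftAsg_zero {AP : Type} (As : ℕ → Trace AP) : shiftAsg As 0 = As := by
  funext x n
  simp [shiftAsg, Trace.shift]

theorem s_iff {m : ℕ} {F : ℕ → ℕ → ℕ} (hS : SCl F) (hL : LCl F) (ψ : QF (Fin m)) :
    ∀ g j, F 2 (pr (QF.codeWith Fin.val ψ) (pr g j)) = 1 ↔
      QF.sat ψ (shiftAsg (fun y => eF F m (Lfun g y)) j) := by
  induction ψ with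
  | atom a x =>
      intro g j
      show F 2 (pr (Nat.pair 0 (Nat.pair a.val x)) (pr g j)) = 1 ↔ _
      rw [hS.1, L_eq hL]
      simp only [QF.sat, shiftAsg, Trace.shift, eF, Set.mem_setOf_eq, Nat.zero_add]
  | neg ψ ih =>
      intro g j
      show F 2 (pr (Nat.pair 1 _) (pr g j)) = 1 ↔ _
      rw [hS.2.1, ih g j]
      simp [QF.sat]
  | disj ψ₁ ψ₂ ih₁ ih₂ =>
      intro g j
      show F 2 (pr (Nat.pair 2 (Nat.pair _ _)) (pr g j)) = 1 ↔ _
      rw [hS.2.2.1, ih₁ g j, ih₂ g j]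
      simp [QF.sat]
  | next ψ ih =>
      intro g j
      show F 2 (pr (Nat.pair 3 _) (pr g j)) = 1 ↔ _
      rw [hS.2.2.2.1, ih g (j+1)]
      simp only [QF.sat, shiftAsg_shiftAsg]
      rw [Nat.add_comm 1 j]
  | untl ψ₁ ψ₂ ih₁ ih₂ =>
      intro g j
      show F 2 (pr (Nat.pair 4 (Nat.pair _ _)) (pr g j)) = 1 ↔ _
      rw [hS.2.2.2.2]
      simp only [QF.sat, shiftAsg_shiftAsg]
      exact exists_congr fun k => and_congr (ih₂ g (k+j))
        (forall_congr' fun k' => imp_congr Iff.rfl (ih₁ g (k'+j)))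

theorem p_iff {m : ℕ} {F : ℕ → ℕ → ℕ} (hP : PCl F) (hS : SCl F) (hL : LCl F)
    (φ : HFormula (Fin m)) :
    ∀ g, F 3 (pr (HFormula.codeWith Fin.val φ) g) = 1 ↔
      CSat (eF F m) (DF F) φ (fun y => Lfun g y) := by
  induction φ with
  | ex x φ ih =>
      intro g
      show F 3 (pr (Nat.pair 0 (Nat.pair x _)) g) = 1 ↔ _
      rw [hP.1]
      simp only [CSat]
      apply exists_congr; intro k
      apply and_congr Iff.rfl
      rw [ih (cns x k g)]
      have hupd : (fun y => Lfun (cns x k g) y) =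
          Function.update (fun y => Lfun g y) x k := by
        funext y
        rw [Lfun_cns, Function.update_apply]
      rw [hupd]
  | all x φ ih =>
      intro g
      show F 3 (pr (Nat.pair 1 (Nat.pair x _)) g) = 1 ↔ _
      rw [hP.2.1]
      simp only [CSat]
      apply forall_congr'; intro k
      apply imp_congr Iff.rfl
      rw [ih (cns x k g)]
      have hupd : (fun y => Lfun (cns x k g) y) =
          Function.update (fun y => Lfun g y) x k := by
        funext y
        rw [Lfun_cns, Function.update_apply]
      rw [hupd]
  | qf ψ =>
      intro g
      show F 3 (pr (Nat.pair 2 _) g) = 1 ↔ _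
      rw [hP.2.2, s_iff hS hL ψ g 0, shiftAsg_zero]
      simp [CSat]

theorem q_iff {m : ℕ} {F : ℕ → ℕ → ℕ} (hQ : QCl m F) (hL : LCl F) :
    ∀ n B, F 4 (pr n B) = 1 ↔
      ∃ ψ : QF (Fin m), QF.codeWith Fin.val ψ = n ∧
        ψ.freeVars ⊆ {y | Lfun B y = 1} := by
  intro n
  induction n using Nat.strong_induction_on with
  | _ n ih =>
    intro B
    constructor
    · intro h
      rcases (hQ n B).mp h with ⟨a, x, rfl, ham, hx⟩ | ⟨c', rfl, h'⟩ |
        ⟨c₁, c₂, rfl, h₁, h₂⟩ | ⟨c', rfl, h'⟩ | ⟨c₁, c₂, rfl, h₁, h₂⟩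
      · refine ⟨.atom ⟨a, ham⟩ x, rfl, ?_⟩
        intro y hy
        have hyx : y = x := hy
        rw [L_eq hL] at hx
        subst hyx
        exact hx
      · obtain ⟨ψ', hc, hfv⟩ := (ih c' (lt_pair_right' 1 c' le_rfl) B).mp h'
        exact ⟨.neg ψ', by show Nat.pair 1 _ = _; rw [hc], hfv⟩
      · have hl₁ : c₁ < Nat.pair 2 (Nat.pair c₁ c₂) :=
          lt_of_le_of_lt (Nat.left_le_pair _ _) (lt_pair_right' 2 _ (by omega))
        have hl₂ : c₂ < Nat.pair 2 (Nat.pair c₁ c₂) :=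
          lt_of_le_of_lt (Nat.right_le_pair _ _) (lt_pair_right' 2 _ (by omega))
        obtain ⟨ψ₁, hc₁, hfv₁⟩ := (ih c₁ hl₁ B).mp h₁
        obtain ⟨ψ₂, hc₂, hfv₂⟩ := (ih c₂ hl₂ B).mp h₂
        refine ⟨.disj ψ₁ ψ₂, by show Nat.pair 2 (Nat.pair _ _) = _; rw [hc₁, hc₂], ?_⟩
        exact Set.union_subset hfv₁ hfv₂
      · obtain ⟨ψ', hc, hfv⟩ := (ih c' (lt_pair_right' 3 c' (by omega)) B).mp h'
        exact ⟨.next ψ', by show Nat.pair 3 _ = _; rw [hc], hfv⟩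
      · have hl₁ : c₁ < Nat.pair 4 (Nat.pair c₁ c₂) :=
          lt_of_le_of_lt (Nat.left_le_pair _ _) (lt_pair_right' 4 _ (by omega))
        have hl₂ : c₂ < Nat.pair 4 (Nat.pair c₁ c₂) :=
          lt_of_le_of_lt (Nat.right_le_pair _ _) (lt_pair_right' 4 _ (by omega))
        obtain ⟨ψ₁, hc₁, hfv₁⟩ := (ih c₁ hl₁ B).mp h₁
        obtain ⟨ψ₂, hc₂, hfv₂⟩ := (ih c₂ hl₂ B).mp h₂
        refine ⟨.untl ψ₁ ψ₂, by show Nat.pair 4 (Nat.pair _ _) = _; rw [hc₁, hc₂], ?_⟩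
        exact Set.union_subset hfv₁ hfv₂
    · rintro ⟨ψ, rfl, hfv⟩
      apply (hQ _ B).mpr
      cases ψ with
      | atom a x =>
          refine Or.inl ⟨a.val, x, rfl, a.isLt, ?_⟩
          rw [L_eq hL]
          exact hfv rfl
      | neg ψ' =>
          refine Or.inr (Or.inl ⟨_, rfl, ?_⟩)
          exact (ih _ (lt_pair_right' 1 _ le_rfl) B).mpr ⟨ψ', rfl, hfv⟩
      | disj ψ₁ ψ₂ =>
          refine Or.inr (Or.inr (Or.inl ⟨_, _, rfl, ?_, ?_⟩))
          · exact (ih _ (lt_of_le_of_lt (Nat.left_le_pair _ _)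
              (lt_pair_right' 2 _ (by omega))) B).mpr
              ⟨ψ₁, rfl, Set.Subset.trans Set.subset_union_left hfv⟩
          · exact (ih _ (lt_of_le_of_lt (Nat.right_le_pair _ _)
              (lt_pair_right' 2 _ (by omega))) B).mpr
              ⟨ψ₂, rfl, Set.Subset.trans Set.subset_union_right hfv⟩
      | next ψ' =>
          refine Or.inr (Or.inr (Or.inr (Or.inl ⟨_, rfl, ?_⟩)))
          exact (ih _ (lt_pair_right' 3 _ (by omega)) B).mpr ⟨ψ', rfl, hfv⟩
      | untl ψ₁ ψ₂ =>
          refine Or.inr (Or.inr (Or.inr (Or.inr ⟨_, _, rfl, ?_, ?_⟩)))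
          · exact (ih _ (lt_of_le_of_lt (Nat.left_le_pair _ _)
              (lt_pair_right' 4 _ (by omega))) B).mpr
              ⟨ψ₁, rfl, Set.Subset.trans Set.subset_union_left hfv⟩
          · exact (ih _ (lt_of_le_of_lt (Nat.right_le_pair _ _)
              (lt_pair_right' 4 _ (by omega))) B).mpr
              ⟨ψ₂, rfl, Set.Subset.trans Set.subset_union_right hfv⟩

theorem h_iff {m : ℕ} {F : ℕ → ℕ → ℕ} (hH : HCl F) (hQ : QCl m F) (hL : LCl F) :
    ∀ n B, F 5 (pr n B) = 1 ↔
      ∃ φ : HFormula (Fin m), HFormula.codeWith Fin.val φ = n ∧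
        φ.freeVars ⊆ {y | Lfun B y = 1} := by
  intro n
  induction n using Nat.strong_induction_on with
  | _ n ih =>
    intro B
    constructor
    · intro h
      rcases (hH n B).mp h with ⟨x, c', rfl, hlt, h'⟩ | ⟨x, c', rfl, h'⟩ | ⟨c', rfl, h'⟩
      · obtain ⟨φ', hc, hfv⟩ := (ih c' hlt (cns x 1 B)).mp h'
        refine ⟨.ex x φ', by show Nat.pair 0 (Nat.pair x _) = _; rw [hc], ?_⟩
        rintro y ⟨hy, hyx⟩
        have := hfv hy
        simp only [Set.mem_setOf_eq, Set.mem_singleton_iff] at this hyx ⊢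
        rw [Lfun_cns, if_neg hyx] at this
        exact this
      · have hlt : c' < Nat.pair 1 (Nat.pair x c') :=
          lt_of_le_of_lt (Nat.right_le_pair _ _) (lt_pair_right' 1 _ le_rfl)
        obtain ⟨φ', hc, hfv⟩ := (ih c' hlt (cns x 1 B)).mp h'
        refine ⟨.all x φ', by show Nat.pair 1 (Nat.pair x _) = _; rw [hc], ?_⟩
        rintro y ⟨hy, hyx⟩
        have := hfv hy
        simp only [Set.mem_setOf_eq, Set.mem_singleton_iff] at this hyx ⊢
        rw [Lfun_cns, if_neg hyx] at this
        exact this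
      · obtain ⟨ψ, hc, hfv⟩ := (q_iff hQ hL c' B).mp h'
        exact ⟨.qf ψ, by show Nat.pair 2 _ = _; rw [hc], hfv⟩
    · rintro ⟨φ, rfl, hfv⟩
      apply (hH _ B).mpr
      cases φ with
      | ex x φ' =>
          refine Or.inl ⟨x, _, rfl, codeh_ex_sub_lt Fin.val x φ', ?_⟩
          refine (ih _ (codeh_ex_sub_lt Fin.val x φ') (cns x 1 B)).mpr ⟨φ', rfl, ?_⟩
          intro y hy
          simp only [Set.mem_setOf_eq]
          rw [Lfun_cns]
          by_cases hyx : y = x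
          · rw [if_pos hyx]
          · rw [if_neg hyx]
            exact hfv ⟨hy, by simpa using hyx⟩
      | all x φ' =>
          refine Or.inr (Or.inl ⟨x, _, rfl, ?_⟩)
          have hlt : HFormula.codeWith Fin.val φ' <
              Nat.pair 1 (Nat.pair x (HFormula.codeWith Fin.val φ')) :=
            lt_of_le_of_lt (Nat.right_le_pair _ _) (lt_pair_right' 1 _ le_rfl)
          refine (ih _ hlt (cns x 1 B)).mpr ⟨φ', rfl, ?_⟩
          intro y hy
          simp only [Set.mem_setOf_eq]
          rw [Lfun_cns]
          by_cases hyx : y = x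
          · rw [if_pos hyx]
          · rw [if_neg hyx]
            exact hfv ⟨hy, by simpa using hyx⟩
      | qf ψ =>
          exact Or.inr (Or.inr ⟨_, rfl, (q_iff hQ hL _ B).mpr ⟨ψ, rfl, hfv⟩⟩)

end Sigma11Proof
namespace Sigma11Proof

theorem clauses_iff (m : ℕ) (x : ℕ) :
    (∃ φ : HFormula (Fin m), φ.IsSentence ∧ HFormula.codeWith Fin.val φ = x ∧
      HSatisfiable φ) ↔
    ∃ F : ℕ → ℕ → ℕ, Clauses m F ∧ F 5 (pr x 0) = 1 ∧ F 3 (pr x 0) = 1 := by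
  constructor
  · rintro ⟨φ, hsent, rfl, T, hT⟩
    obtain ⟨T', hTc, hT'⟩ := countable_model hT
    have hfv : ∀ y ∈ φ.freeVars, False := by
      intro y hy
      rw [HFormula.IsSentence] at hsent
      rw [hsent] at hy
      exact hy
    obtain ⟨e, D, hED⟩ : ∃ (e : ℕ → Trace (Fin m)) (D : Set ℕ), e '' D = T' := by
      rcases T'.eq_empty_or_nonempty with rfl | hne
      · exact ⟨fun _ _ => ∅, ∅, by simp⟩
      · obtain ⟨e, he⟩ := hTc.exists_eq_range hne
        exact ⟨e, Set.univ, by rw [Set.image_univ, he]⟩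
    have hsat : φ.sat (e '' D) (fun _ _ => ∅) := by rw [hED]; exact hT'
    have hcsat : CSat e D φ (fun _ => 0) :=
      sat_to_csat e D φ (fun _ => 0) _ hsat (fun y hy => absurd (hfv y hy) not_false)
    refine ⟨Fbuild m e D, canonical_clauses m e D, ?_, ?_⟩
    · obtain ⟨hL, hS, hP, hQ, hH⟩ := canonical_clauses m e D
      exact (h_iff hH hQ hL _ 0).mpr ⟨φ, rfl, fun y hy => absurd (hfv y hy) not_false⟩
    · obtain ⟨hL, hS, hP, hQ, hH⟩ := canonical_clauses m e D
      apply (p_iff hP hS hL φ 0).mpr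
      rw [eF_Fbuild, DF_Fbuild]
      have : (fun y => Lfun 0 y) = (fun _ : ℕ => (0:ℕ)) := by
        funext y; exact Lfun_zero y
      rw [this]
      exact hcsat
  · rintro ⟨F, ⟨hL, hS, hP, hQ, hH⟩, h5, h3⟩
    obtain ⟨φ, hcode, hfv⟩ := (h_iff hH hQ hL x 0).mp h5
    have hsent : φ.IsSentence := by
      rw [HFormula.IsSentence]
      apply Set.eq_empty_iff_forall_notMem.mpr
      intro y hy
      have := hfv hy
      simp only [Set.mem_setOf_eq, Lfun_zero] at this
      omega
    refine ⟨φ, hsent, hcode, ⟨eF F m '' DF F, ?_⟩⟩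
    have hcsat : CSat (eF F m) (DF F) φ (fun y => Lfun 0 y) := by
      apply (p_iff hP hS hL φ 0).mp
      rw [hcode]
      exact h3
    apply csat_to_sat (eF F m) (DF F) φ (fun y => Lfun 0 y) _ hcsat
    intro y hy
    rw [hsent] at hy
    exact absurd hy (Set.notMem_empty y)
end Sigma11Proof
namespace Sigma11Proof

/-! ### definability framework for `AForm` -/

def TermDef (f : (ℕ → ℕ) → (ℕ → ℕ → ℕ) → ℕ) : Prop :=
  ∃ t : ATerm, ∀ v F, t.eval v F = f v F

def FormDef (P : (ℕ → ℕ) → (ℕ → ℕ → ℕ) → Prop) : Prop :=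
  ∃ φ : AForm, ∀ v F, φ.sat v F ↔ P v F

namespace TermDef

lemma var (i : ℕ) : TermDef (fun v _ => v i) := ⟨.var i, fun _ _ => rfl⟩

lemma zero : TermDef (fun _ _ => 0) := ⟨.zero, fun _ _ => rfl⟩

lemma one : TermDef (fun _ _ => 1) := ⟨.one, fun _ _ => rfl⟩

lemma add {f g} (hf : TermDef f) (hg : TermDef g) :
    TermDef (fun v F => f v F + g v F) := by
  obtain ⟨t, ht⟩ := hf; obtain ⟨s, hs⟩ := hg
  exact ⟨.add t s, fun v F => by simp [ATerm.eval, ht, hs]⟩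

lemma mul {f g} (hf : TermDef f) (hg : TermDef g) :
    TermDef (fun v F => f v F * g v F) := by
  obtain ⟨t, ht⟩ := hf; obtain ⟨s, hs⟩ := hg
  exact ⟨.mul t s, fun v F => by simp [ATerm.eval, ht, hs]⟩

lemma app (k : ℕ) {f} (hf : TermDef f) : TermDef (fun v F => F k (f v F)) := by
  obtain ⟨t, ht⟩ := hf
  exact ⟨.app k t, fun v F => by simp [ATerm.eval, ht]⟩

lemma const : ∀ n : ℕ, TermDef (fun _ _ => n)
  | 0 => zero
  | (n+1) => by
      have := add (const n) one
      simpa using this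

lemma pr' {f g} (hf : TermDef f) (hg : TermDef g) :
    TermDef (fun v F => pr (f v F) (g v F)) := by
  have := add (mul (add hf hg) (add hf hg)) hf
  simpa [pr] using this

end TermDef

namespace FormDef

lemma eq {f g} (hf : TermDef f) (hg : TermDef g) :
    FormDef (fun v F => f v F = g v F) := by
  obtain ⟨t, ht⟩ := hf; obtain ⟨s, hs⟩ := hg
  exact ⟨.eq t s, fun v F => by simp [AForm.sat, ht, hs]⟩

lemma lt {f g} (hf : TermDef f) (hg : TermDef g) :
    FormDef (fun v F => f v F < g v F) := by
  obtain ⟨t, ht⟩ := hf; obtain ⟨s, hs⟩ := hg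
  exact ⟨.lt t s, fun v F => by simp [AForm.sat, ht, hs]⟩

lemma not {P} (h : FormDef P) : FormDef (fun v F => ¬ P v F) := by
  obtain ⟨φ, hφ⟩ := h
  exact ⟨.neg φ, fun v F => by simp [AForm.sat, hφ]⟩

lemma or {P Q} (hP : FormDef P) (hQ : FormDef Q) :
    FormDef (fun v F => P v F ∨ Q v F) := by
  obtain ⟨φ, hφ⟩ := hP; obtain ⟨ψ, hψ⟩ := hQ
  exact ⟨.disj φ ψ, fun v F => by simp [AForm.sat, hφ, hψ]⟩

lemma and {P Q} (hP : FormDef P) (hQ : FormDef Q) :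
    FormDef (fun v F => P v F ∧ Q v F) := by
  obtain ⟨φ, hφ⟩ := hP; obtain ⟨ψ, hψ⟩ := hQ
  refine ⟨.neg (.disj (.neg φ) (.neg ψ)), fun v F => ?_⟩
  simp [AForm.sat, hφ, hψ]

lemma imp {P Q} (hP : FormDef P) (hQ : FormDef Q) :
    FormDef (fun v F => P v F → Q v F) := by
  obtain ⟨φ, hφ⟩ := hP; obtain ⟨ψ, hψ⟩ := hQ
  refine ⟨.disj (.neg φ) ψ, fun v F => ?_⟩
  simp [AForm.sat, hφ, hψ]
  tauto

lemma exN (i : ℕ) {P} (h : FormDef P) :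
    FormDef (fun v F => ∃ n : ℕ, P (Function.update v i n) F) := by
  obtain ⟨φ, hφ⟩ := h
  exact ⟨.exN i φ, fun v F => by simp [AForm.sat, hφ]⟩

lemma allN (i : ℕ) {P} (h : FormDef P) :
    FormDef (fun v F => ∀ n : ℕ, P (Function.update v i n) F) := by
  obtain ⟨φ, hφ⟩ := h
  exact ⟨.allN i φ, fun v F => by simp [AForm.sat, hφ]⟩

lemma congr {P Q} (h : FormDef P) (hiff : ∀ v F, P v F ↔ Q v F) : FormDef Q := by
  obtain ⟨φ, hφ⟩ := h
  exact ⟨φ, fun v F => (hφ v F).trans (hiff v F)⟩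

end FormDef

lemma FormDef.iff' {P Q} (hP : FormDef P) (hQ : FormDef Q) :
    FormDef (fun v F => (P v F ↔ Q v F)) :=
  FormDef.congr (FormDef.and (FormDef.imp hP hQ) (FormDef.imp hQ hP))
    (fun v F => iff_iff_implies_and_implies.symm)

/-- `h = Nat.pair f g` is definable. -/
lemma pairRel {f g h} (hf : TermDef f) (hg : TermDef g) (hh : TermDef h) :
    FormDef (fun v F => h v F = Nat.pair (f v F) (g v F)) := by
  apply FormDef.congr
    (FormDef.or
      (FormDef.and (FormDef.lt hf hg)
        (FormDef.eq hh (TermDef.add (TermDef.mul hg hg) hf)))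
      (FormDef.and (FormDef.not (FormDef.lt hf hg))
        (FormDef.eq hh (TermDef.add (TermDef.add (TermDef.mul hf hf) hf) hg))))
  intro v F
  unfold Nat.pair
  by_cases hfg : f v F < g v F <;> simp [hfg]

end Sigma11Proof
namespace Sigma11Proof
open TermDef (var zero one add mul app const pr')

lemma fd_L1 : FormDef (fun _ F => ∀ y, F 1 (pr 0 y) = 0) := by
  refine FormDef.congr (FormDef.allN 1 (FormDef.eq (app 1 (pr' zero (var 1))) zero)) ?_
  intro v F
  simp

lemma fd_L2 : FormDef (fun _ F =>
    ∀ x k g y, F 1 (pr (cns x k g) y) = if y = x then k else F 1 (pr g y)) := by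
  have h1 := pairRel (var 1) (var 2) (var 5)
  have h2 := pairRel (var 5) (var 3) (var 6)
  have hthen := FormDef.and (FormDef.eq (var 4) (var 1))
    (FormDef.eq (app 1 (pr' (add (var 6) one) (var 4))) (var 2))
  have helse := FormDef.and (FormDef.not (FormDef.eq (var 4) (var 1)))
    (FormDef.eq (app 1 (pr' (add (var 6) one) (var 4))) (app 1 (pr' (var 3) (var 4))))
  have hbody := FormDef.and h1 (FormDef.and h2 (FormDef.or hthen helse))
  refine FormDef.congr (FormDef.allN 1 (FormDef.allN 2 (FormDef.allN 3 (FormDef.allN 4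
    (FormDef.exN 5 (FormDef.exN 6 hbody)))))) ?_
  intro v F
  simp [Function.update_apply, cns, eq_ite_iff]

end Sigma11Proof

namespace Sigma11Proof
open TermDef (var zero one add mul app const pr')

lemma fd_S1 : FormDef (fun _ F => ∀ a x g j,
    (F 2 (pr (Nat.pair 0 (Nat.pair a x)) (pr g j)) = 1 ↔
      F 0 (pr (F 1 (pr g x)) (pr j a)) = 1)) := by
  have h1 := pairRel (var 1) (var 2) (var 5)
  have h2 := pairRel zero (var 5) (var 6)
  have hiff := FormDef.iff'
    (FormDef.eq (app 2 (pr' (var 6) (pr' (var 3) (var 4)))) one)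
    (FormDef.eq (app 0 (pr' (app 1 (pr' (var 3) (var 2))) (pr' (var 4) (var 1)))) one)
  refine FormDef.congr (FormDef.allN 1 (FormDef.allN 2 (FormDef.allN 3 (FormDef.allN 4
    (FormDef.exN 5 (FormDef.exN 6 (FormDef.and h1 (FormDef.and h2 hiff)))))))) ?_
  intro v F
  simp [Function.update_apply]

lemma fd_S2 : FormDef (fun _ F => ∀ c g j,
    (F 2 (pr (Nat.pair 1 c) (pr g j)) = 1 ↔ ¬ F 2 (pr c (pr g j)) = 1)) := by
  have h1 := pairRel one (var 1) (var 4)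
  have hiff := FormDef.iff'
    (FormDef.eq (app 2 (pr' (var 4) (pr' (var 2) (var 3)))) one)
    (FormDef.not (FormDef.eq (app 2 (pr' (var 1) (pr' (var 2) (var 3)))) one))
  refine FormDef.congr (FormDef.allN 1 (FormDef.allN 2 (FormDef.allN 3
    (FormDef.exN 4 (FormDef.and h1 hiff))))) ?_
  intro v F
  simp [Function.update_apply]

lemma fd_S3 : FormDef (fun _ F => ∀ c₁ c₂ g j,
    (F 2 (pr (Nat.pair 2 (Nat.pair c₁ c₂)) (pr g j)) = 1 ↔
      (F 2 (pr c₁ (pr g j)) = 1 ∨ F 2 (pr c₂ (pr g j)) = 1))) := by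
  have h1 := pairRel (var 1) (var 2) (var 5)
  have h2 := pairRel (const 2) (var 5) (var 6)
  have hiff := FormDef.iff'
    (FormDef.eq (app 2 (pr' (var 6) (pr' (var 3) (var 4)))) one)
    (FormDef.or (FormDef.eq (app 2 (pr' (var 1) (pr' (var 3) (var 4)))) one)
      (FormDef.eq (app 2 (pr' (var 2) (pr' (var 3) (var 4)))) one))
  refine FormDef.congr (FormDef.allN 1 (FormDef.allN 2 (FormDef.allN 3 (FormDef.allN 4
    (FormDef.exN 5 (FormDef.exN 6 (FormDef.and h1 (FormDef.and h2 hiff)))))))) ?_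
  intro v F
  simp [Function.update_apply]

lemma fd_S4 : FormDef (fun _ F => ∀ c g j,
    (F 2 (pr (Nat.pair 3 c) (pr g j)) = 1 ↔ F 2 (pr c (pr g (j+1))) = 1)) := by
  have h1 := pairRel (const 3) (var 1) (var 4)
  have hiff := FormDef.iff'
    (FormDef.eq (app 2 (pr' (var 4) (pr' (var 2) (var 3)))) one)
    (FormDef.eq (app 2 (pr' (var 1) (pr' (var 2) (add (var 3) one)))) one)
  refine FormDef.congr (FormDef.allN 1 (FormDef.allN 2 (FormDef.allN 3
    (FormDef.exN 4 (FormDef.and h1 hiff))))) ?_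
  intro v F
  simp [Function.update_apply]

lemma fd_S5 : FormDef (fun _ F => ∀ c₁ c₂ g j,
    (F 2 (pr (Nat.pair 4 (Nat.pair c₁ c₂)) (pr g j)) = 1 ↔
      (∃ k, F 2 (pr c₂ (pr g (k + j))) = 1 ∧
        ∀ k' < k, F 2 (pr c₁ (pr g (k' + j))) = 1))) := by
  have h1 := pairRel (var 1) (var 2) (var 5)
  have h2 := pairRel (const 4) (var 5) (var 6)
  have hrhs := FormDef.exN 7 (FormDef.and
    (FormDef.eq (app 2 (pr' (var 2) (pr' (var 3) (add (var 7) (var 4))))) one)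
    (FormDef.allN 8 (FormDef.imp (FormDef.lt (var 8) (var 7))
      (FormDef.eq (app 2 (pr' (var 1) (pr' (var 3) (add (var 8) (var 4))))) one))))
  have hiff := FormDef.iff'
    (FormDef.eq (app 2 (pr' (var 6) (pr' (var 3) (var 4)))) one) hrhs
  refine FormDef.congr (FormDef.allN 1 (FormDef.allN 2 (FormDef.allN 3 (FormDef.allN 4
    (FormDef.exN 5 (FormDef.exN 6 (FormDef.and h1 (FormDef.and h2 hiff)))))))) ?_
  intro v F
  simp [Function.update_apply]

lemma fd_P1 : FormDef (fun _ F => ∀ x c g,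
    (F 3 (pr (Nat.pair 0 (Nat.pair x c)) g) = 1 ↔
      (∃ k, F 6 k = 1 ∧ F 3 (pr c (cns x k g)) = 1))) := by
  have h1 := pairRel (var 1) (var 2) (var 4)
  have h2 := pairRel zero (var 4) (var 5)
  have hrhs := FormDef.exN 6 (FormDef.and (FormDef.eq (app 6 (var 6)) one)
    (FormDef.exN 7 (FormDef.exN 8 (FormDef.and (pairRel (var 1) (var 6) (var 7))
      (FormDef.and (pairRel (var 7) (var 3) (var 8))
        (FormDef.eq (app 3 (pr' (var 2) (add (var 8) one))) one))))))
  have hiff := FormDef.iff' (FormDef.eq (app 3 (pr' (var 5) (var 3))) one) hrhs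
  refine FormDef.congr (FormDef.allN 1 (FormDef.allN 2 (FormDef.allN 3
    (FormDef.exN 4 (FormDef.exN 5 (FormDef.and h1 (FormDef.and h2 hiff))))))) ?_
  intro v F
  simp [Function.update_apply, cns]

lemma fd_P2 : FormDef (fun _ F => ∀ x c g,
    (F 3 (pr (Nat.pair 1 (Nat.pair x c)) g) = 1 ↔
      (∀ k, F 6 k = 1 → F 3 (pr c (cns x k g)) = 1))) := by
  have h1 := pairRel (var 1) (var 2) (var 4)
  have h2 := pairRel one (var 4) (var 5)
  have hrhs := FormDef.allN 6 (FormDef.imp (FormDef.eq (app 6 (var 6)) one)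
    (FormDef.exN 7 (FormDef.exN 8 (FormDef.and (pairRel (var 1) (var 6) (var 7))
      (FormDef.and (pairRel (var 7) (var 3) (var 8))
        (FormDef.eq (app 3 (pr' (var 2) (add (var 8) one))) one))))))
  have hiff := FormDef.iff' (FormDef.eq (app 3 (pr' (var 5) (var 3))) one) hrhs
  refine FormDef.congr (FormDef.allN 1 (FormDef.allN 2 (FormDef.allN 3
    (FormDef.exN 4 (FormDef.exN 5 (FormDef.and h1 (FormDef.and h2 hiff))))))) ?_
  intro v F
  simp [Function.update_apply, cns]

lemma fd_P3 : FormDef (fun _ F => ∀ c g,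
    (F 3 (pr (Nat.pair 2 c) g) = 1 ↔ F 2 (pr c (pr g 0)) = 1)) := by
  have h1 := pairRel (const 2) (var 1) (var 3)
  have hiff := FormDef.iff' (FormDef.eq (app 3 (pr' (var 3) (var 2))) one)
    (FormDef.eq (app 2 (pr' (var 1) (pr' (var 2) zero))) one)
  refine FormDef.congr (FormDef.allN 1 (FormDef.allN 2
    (FormDef.exN 3 (FormDef.and h1 hiff)))) ?_
  intro v F
  simp [Function.update_apply]

lemma fd_Q (m : ℕ) : FormDef (fun _ F => QCl m F) := by
  have hD1 := FormDef.exN 3 (FormDef.exN 4 (FormDef.exN 5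
    (FormDef.and (pairRel (var 3) (var 4) (var 5))
      (FormDef.and (pairRel zero (var 5) (var 1))
        (FormDef.and (FormDef.lt (var 3) (const m))
          (FormDef.eq (app 1 (pr' (var 2) (var 4))) one))))))
  have hD2 := FormDef.exN 3 (FormDef.and (pairRel one (var 3) (var 1))
    (FormDef.eq (app 4 (pr' (var 3) (var 2))) one))
  have hD3 := FormDef.exN 3 (FormDef.exN 4 (FormDef.exN 5
    (FormDef.and (pairRel (var 3) (var 4) (var 5))
      (FormDef.and (pairRel (const 2) (var 5) (var 1))
        (FormDef.and (FormDef.eq (app 4 (pr' (var 3) (var 2))) one)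
          (FormDef.eq (app 4 (pr' (var 4) (var 2))) one))))))
  have hD4 := FormDef.exN 3 (FormDef.and (pairRel (const 3) (var 3) (var 1))
    (FormDef.eq (app 4 (pr' (var 3) (var 2))) one))
  have hD5 := FormDef.exN 3 (FormDef.exN 4 (FormDef.exN 5
    (FormDef.and (pairRel (var 3) (var 4) (var 5))
      (FormDef.and (pairRel (const 4) (var 5) (var 1))
        (FormDef.and (FormDef.eq (app 4 (pr' (var 3) (var 2))) one)
          (FormDef.eq (app 4 (pr' (var 4) (var 2))) one))))))
  have hiff := FormDef.iff' (FormDef.eq (app 4 (pr' (var 1) (var 2))) one)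
    (FormDef.or hD1 (FormDef.or hD2 (FormDef.or hD3 (FormDef.or hD4 hD5))))
  refine FormDef.congr (FormDef.allN 1 (FormDef.allN 2 hiff)) ?_
  intro v F
  unfold QCl
  simp [Function.update_apply]

lemma fd_H : FormDef (fun _ F => HCl F) := by
  have hE1 := FormDef.exN 3 (FormDef.exN 4 (FormDef.exN 5
    (FormDef.and (pairRel (var 3) (var 4) (var 5))
      (FormDef.and (pairRel zero (var 5) (var 1))
        (FormDef.and (FormDef.lt (var 4) (var 1))
          (FormDef.exN 6 (FormDef.exN 7 (FormDef.and (pairRel (var 3) one (var 6))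
            (FormDef.and (pairRel (var 6) (var 2) (var 7))
              (FormDef.eq (app 5 (pr' (var 4) (add (var 7) one))) one))))))))))
  have hE2 := FormDef.exN 3 (FormDef.exN 4 (FormDef.exN 5
    (FormDef.and (pairRel (var 3) (var 4) (var 5))
      (FormDef.and (pairRel one (var 5) (var 1))
        (FormDef.exN 6 (FormDef.exN 7 (FormDef.and (pairRel (var 3) one (var 6))
          (FormDef.and (pairRel (var 6) (var 2) (var 7))
            (FormDef.eq (app 5 (pr' (var 4) (add (var 7) one))) one)))))))))
  have hE3 := FormDef.exN 3 (FormDef.and (pairRel (const 2) (var 3) (var 1))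
    (FormDef.eq (app 4 (pr' (var 3) (var 2))) one))
  have hiff := FormDef.iff' (FormDef.eq (app 5 (pr' (var 1) (var 2))) one)
    (FormDef.or hE1 (FormDef.or hE2 hE3))
  refine FormDef.congr (FormDef.allN 1 (FormDef.allN 2 hiff)) ?_
  intro v F
  unfold HCl
  simp [Function.update_apply, cns]

lemma fd_FIN : FormDef (fun v F => F 5 (pr (v 0) 0) = 1 ∧ F 3 (pr (v 0) 0) = 1) :=
  FormDef.and (FormDef.eq (app 5 (pr' (var 0) zero)) one)
    (FormDef.eq (app 3 (pr' (var 0) zero)) one)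

lemma fd_main (m : ℕ) : FormDef (fun v F =>
    Clauses m F ∧ (F 5 (pr (v 0) 0) = 1 ∧ F 3 (pr (v 0) 0) = 1)) := by
  have hcl := FormDef.and (FormDef.and fd_L1 fd_L2)
    (FormDef.and (FormDef.and fd_S1 (FormDef.and fd_S2 (FormDef.and fd_S3
        (FormDef.and fd_S4 fd_S5))))
      (FormDef.and (FormDef.and fd_P1 (FormDef.and fd_P2 fd_P3))
        (FormDef.and (fd_Q m) fd_H)))
  refine FormDef.congr (FormDef.and hcl fd_FIN) ?_
  intro v F
  unfold Clauses LCl SCl PCl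
  exact Iff.rfl

end Sigma11Proof
/-- **HyperLTL satisfiability is in Σ¹₁**: for every finite set `AP` of atomic
propositions (here `Fin m`), under the fixed computable injective encoding
`HFormula.codeWith Fin.val`, the set of codes of HyperLTL sentences that have a
model is a Σ¹₁ subset of ℕ. -/
theorem hyperltl_sat_in_Sigma11 (m : ℕ) :
    Sigma11 {n : ℕ | ∃ φ : HFormula (Fin m), φ.IsSentence ∧
      HFormula.codeWith Fin.val φ = n ∧ HSatisfiable φ} := by
  obtain ⟨ψ, hψ⟩ := Sigma11Proof.fd_main m
  refine ⟨ψ, fun x => ?_⟩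
  rw [Set.mem_setOf_eq, Sigma11Proof.clauses_iff m x]
  constructor
  · rintro ⟨F, h1, h2, h3⟩
    exact ⟨F, (hψ _ F).mpr ⟨h1, h2, h3⟩⟩
  · rintro ⟨F, h⟩
    obtain ⟨h1, h2, h3⟩ := (hψ _ F).mp h
    exact ⟨F, h1, h2, h3⟩
end

section
/- For every FO[<] sentence φ in prenex normal form over 2^AP, every finite word w over 2^AP, and every stretch function f: w ⊨ φ if and only if enc(w,f) ⊨ φ̂, where φ̂ is the HyperLTL sentence obtained from φ by replacing each atom a(x) with a_x and each atom x ≤ y with F(o_x ∧ F o_y), keeping the quantifier prefix (word variables become trace variables). -/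
/-! ### Finite words, stretch functions, and encodings of words as trace sets -/

/-- A finite word over `2^AP`: only letters at positions `< len` are relevant. -/
structure FinWord (AP : Type) : Type where
  len : ℕ
  letter : ℕ → Set AP

/-- A stretch function is strictly monotone with positive first value. -/
def IsStretch (f : ℕ → ℕ) : Prop := StrictMono f ∧ 0 < f 0

/-- The trace encoding position `n` of the word `w`, w.r.t. the stretch function `f`.
The fresh proposition `o` is represented by `none`. -/
def encTrace {AP : Type} (w : FinWord AP) (f : ℕ → ℕ) (n : ℕ) : Trace (Option AP) :=
  fun i => {x | (∃ a : AP, x = some a ∧ i = 0 ∧ a ∈ w.letter n) ∨ (x = none ∧ i = f n)}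

/-- The encoding `enc(w, f)` of a finite word `w` as a set of traces. -/
def encSet {AP : Type} (w : FinWord AP) (f : ℕ → ℕ) : Set (Trace (Option AP)) :=
  {t | ∃ n, n < w.len ∧ t = encTrace w f n}

/-! ### First-order logic over finite words -/

/-- FO[<] formulas over finite words; variables are natural numbers. -/
inductive FO (AP : Type) : Type where
  | atom : AP → ℕ → FO AP
  | le : ℕ → ℕ → FO AP
  | neg : FO AP → FO AP
  | disj : FO AP → FO AP → FO AP
  | ex : ℕ → FO AP → FO AP
  | all : ℕ → FO AP → FO AP

/-- Semantics of FO[<] over a finite word, w.r.t. a position assignment. -/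
def FO.sat {AP : Type} : FO AP → FinWord AP → (ℕ → ℕ) → Prop
  | .atom a x, w, v => a ∈ w.letter (v x)
  | .le x y, _, v => v x ≤ v y
  | .neg φ, w, v => ¬ φ.sat w v
  | .disj φ ψ, w, v => φ.sat w v ∨ ψ.sat w v
  | .ex x φ, w, v => ∃ n, n < w.len ∧ φ.sat w (Function.update v x n)
  | .all x φ, w, v => ∀ n, n < w.len → φ.sat w (Function.update v x n)

def FO.freeVars {AP : Type} : FO AP → Set ℕ
  | .atom _ x => {x}
  | .le x y => {x, y}
  | .neg φ => φ.freeVars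
  | .disj φ ψ => φ.freeVars ∪ ψ.freeVars
  | .ex x φ => φ.freeVars \ {x}
  | .all x φ => φ.freeVars \ {x}

def FO.IsQF {AP : Type} : FO AP → Prop
  | .atom _ _ => True
  | .le _ _ => True
  | .neg φ => φ.IsQF
  | .disj φ ψ => φ.IsQF ∧ ψ.IsQF
  | .ex _ _ => False
  | .all _ _ => False

def FO.IsPrenex {AP : Type} : FO AP → Prop
  | .ex _ φ => φ.IsPrenex
  | .all _ φ => φ.IsPrenex
  | φ => φ.IsQF

/-- A word `w` satisfies the FO[<] sentence `φ`. -/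
def FOModels {AP : Type} (w : FinWord AP) (φ : FO AP) : Prop := φ.sat w (fun _ => 0)

/-! ### The translation from FO[<] to HyperLTL -/

/-- The derived eventually operator `F ψ` (as `(ψ ∨ ¬ψ) U ψ`). -/
def QF.ev {AP : Type} (ψ : QF AP) : QF AP := .untl (.disj ψ (.neg ψ)) ψ

/-- Conjunction, derived from negation and disjunction. -/
def QF.conj {AP : Type} (ψ₁ ψ₂ : QF AP) : QF AP := .neg (.disj (.neg ψ₁) (.neg ψ₂))

/-- The HyperLTL rendering `F(o_x ∧ F o_y)` of the FO[<] atom `x ≤ y`. -/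
def leHat {AP : Type} (x y : ℕ) : QF (Option AP) :=
  QF.ev (QF.conj (.atom none x) (QF.ev (.atom none y)))

/-- Translation of the quantifier-free part: `a(x)` becomes `a_x` and
`x ≤ y` becomes `F(o_x ∧ F o_y)`. -/
def FO.hatQF {AP : Type} : FO AP → QF (Option AP)
  | .atom a x => .atom (some a) x
  | .le x y => leHat x y
  | .neg φ => .neg φ.hatQF
  | .disj φ ψ => .disj φ.hatQF ψ.hatQF
  | .ex _ _ => .atom none 0
  | .all _ _ => .atom none 0

/-- The HyperLTL formula `φ̂` associated with a prenex FO[<] formula `φ`: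
the quantifier prefix is kept, word variables becoming trace variables. -/
def FO.hat {AP : Type} : FO AP → HFormula (Option AP)
  | .ex x φ => .ex x φ.hat
  | .all x φ => .all x φ.hat
  | φ => .qf φ.hatQF

lemma QF.ev_sat {AP : Type} (ψ : QF AP) (As : ℕ → Trace AP) :
    (QF.ev ψ).sat As ↔ ∃ j, ψ.sat (shiftAsg As j) := by
  constructor
  · rintro ⟨j, hj, -⟩; exact ⟨j, hj⟩
  · rintro ⟨j, hj⟩
    exact ⟨j, hj, fun j' _ => by
      by_cases h : ψ.sat (shiftAsg As j')
      · exact Or.inl h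
      · exact Or.inr h⟩

lemma QF.conj_sat {AP : Type} (ψ₁ ψ₂ : QF AP) (As : ℕ → Trace AP) :
    (QF.conj ψ₁ ψ₂).sat As ↔ ψ₁.sat As ∧ ψ₂.sat As := by
  simp only [QF.conj, QF.sat]; tauto

lemma none_mem_encTrace {AP : Type} (w : FinWord AP) (f : ℕ → ℕ) (n i : ℕ) :
    none ∈ encTrace w f n i ↔ i = f n := by
  simp [encTrace]

lemma leHat_sat {AP : Type} (w : FinWord AP) (f : ℕ → ℕ) (hf : StrictMono f)
    (x y m n : ℕ) (As : ℕ → Trace (Option AP))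
    (hx : As x = encTrace w f m) (hy : As y = encTrace w f n) :
    (leHat x y).sat As ↔ m ≤ n := by
  rw [leHat, QF.ev_sat]
  have : ∀ j, (QF.conj (.atom none x) (QF.ev (.atom none y))).sat (shiftAsg As j) ↔
      (j = f m ∧ ∃ k, k + j = f n) := by
    intro j
    rw [QF.conj_sat, QF.ev_sat]
    simp only [QF.sat, shiftAsg, Trace.shift, hx, hy, none_mem_encTrace, Nat.zero_add]
  simp only [this]
  constructor
  · rintro ⟨j, rfl, k, hk⟩
    exact hf.le_iff_le.mp (hk ▸ Nat.le_add_left _ _)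
  · intro h
    have := hf.le_iff_le.mpr h
    exact ⟨f m, rfl, f n - f m, Nat.sub_add_cancel this⟩

lemma some_mem_encTrace {AP : Type} (w : FinWord AP) (f : ℕ → ℕ) (n : ℕ) (a : AP) :
    some a ∈ encTrace w f n 0 ↔ a ∈ w.letter n := by
  simp [encTrace]

lemma qf_correct {AP : Type} (w : FinWord AP) (f : ℕ → ℕ) (hf : StrictMono f)
    (φ : FO AP) (hqf : φ.IsQF) (v : ℕ → ℕ) (As : ℕ → Trace (Option AP))
    (hv : ∀ x ∈ φ.freeVars, As x = encTrace w f (v x)) :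
    φ.sat w v ↔ φ.hatQF.sat As := by
  induction φ with
  | atom a x =>
    have := hv x (by simp [FO.freeVars])
    simp only [FO.sat, FO.hatQF, QF.sat, this, some_mem_encTrace]
  | le x y =>
    have hx := hv x (by simp [FO.freeVars])
    have hy := hv y (by simp [FO.freeVars])
    simp only [FO.sat, FO.hatQF]
    exact (leHat_sat w f hf x y (v x) (v y) As hx hy).symm
  | neg φ ih =>
    simp only [FO.sat, FO.hatQF, QF.sat]
    rw [ih hqf (fun x hx => hv x hx)]
  | disj φ ψ ihφ ihψ =>
    simp only [FO.sat, FO.hatQF, QF.sat]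
    rw [ihφ hqf.1 (fun x hx => hv x (Or.inl hx)),
        ihψ hqf.2 (fun x hx => hv x (Or.inr hx))]
  | ex x φ ih => exact absurd hqf not_false
  | all x φ ih => exact absurd hqf not_false

lemma main_correct {AP : Type} (w : FinWord AP) (f : ℕ → ℕ) (hf : StrictMono f)
    (φ : FO AP) (hpre : φ.IsPrenex) (v : ℕ → ℕ) (As : ℕ → Trace (Option AP))
    (hv : ∀ x ∈ φ.freeVars, v x < w.len ∧ As x = encTrace w f (v x)) :
    φ.sat w v ↔ φ.hat.sat (encSet w f) As := by
  induction φ generalizing v As with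
  | ex x φ ih =>
    simp only [FO.sat, FO.hat, HFormula.sat]
    constructor
    · rintro ⟨n, hn, hsat⟩
      refine ⟨encTrace w f n, ⟨n, hn, rfl⟩, ?_⟩
      rw [← ih hpre (Function.update v x n) _ ?_]
      · exact hsat
      · intro y hy
        by_cases hxy : y = x
        · subst hxy; simp [hn]
        · simp only [Function.update_of_ne hxy]
          exact hv y ⟨hy, hxy⟩
    · rintro ⟨t, ⟨n, hn, rfl⟩, hsat⟩
      refine ⟨n, hn, ?_⟩
      rw [ih hpre (Function.update v x n) _ ?_]
      · exact hsat
      · intro y hy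
        by_cases hxy : y = x
        · subst hxy; simp [hn]
        · simp only [Function.update_of_ne hxy]
          exact hv y ⟨hy, hxy⟩
  | all x φ ih =>
    simp only [FO.sat, FO.hat, HFormula.sat]
    constructor
    · rintro hsat t ⟨n, hn, rfl⟩
      rw [← ih hpre (Function.update v x n) _ ?_]
      · exact hsat n hn
      · intro y hy
        by_cases hxy : y = x
        · subst hxy; simp [hn]
        · simp only [Function.update_of_ne hxy]
          exact hv y ⟨hy, hxy⟩
    · intro hsat n hn
      rw [ih hpre (Function.update v x n) _ ?_]
      · exact hsat (encTrace w f n) ⟨n, hn, rfl⟩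
      · intro y hy
        by_cases hxy : y = x
        · subst hxy; simp [hn]
        · simp only [Function.update_of_ne hxy]
          exact hv y ⟨hy, hxy⟩
  | atom a x =>
    exact qf_correct w f hf _ hpre v As (fun y hy => (hv y hy).2)
  | le x y =>
    exact qf_correct w f hf _ hpre v As (fun z hz => (hv z hz).2)
  | neg φ ih =>
    exact qf_correct w f hf _ hpre v As (fun y hy => (hv y hy).2)
  | disj φ ψ ihφ ihψ =>
    exact qf_correct w f hf _ hpre v As (fun y hy => (hv y hy).2)

/-- **From FO[<] to HyperLTL**: for every FO[<] sentence `φ` in prenex normal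
form, every finite word `w` and every stretch function `f`:
`w ⊨ φ` iff `enc(w, f) ⊨ φ̂`. -/
theorem fo_to_hyperltl (AP : Type) [Fintype AP] (φ : FO AP)
    (hpre : φ.IsPrenex) (hsent : φ.freeVars = ∅)
    (w : FinWord AP) (f : ℕ → ℕ) (hf : IsStretch f) :
    FOModels w φ ↔ HModels (encSet w f) φ.hat := by
  exact main_correct w f hf.1 φ hpre _ _ (fun x hx => by simp [hsent] at hx)
end

section
/- Let m, n ≥ 0 and let (a_i)_{i∈ℕ} be a sequence of letters in 2^AP. For all infinite words w₁, w₂ ∈ ∅^m a₀ ∅^n ∅* a₁ ∅^n ∅* a₂ ∅^n ∅* ⋯ (i.e. both words start with m empty letters, then the letters a₀, a₁, a₂, … in order, with at least n empty letters between consecutive a_i's) and every LTL formula φ of temporal depth at most n: w₁ ⊨ φ if and only if w₂ ⊨ φ. -/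
/-! ### LTL over infinite words -/

inductive LTL (AP : Type) : Type where
  | atom : AP → LTL AP
  | neg  : LTL AP → LTL AP
  | disj : LTL AP → LTL AP → LTL AP
  | next : LTL AP → LTL AP
  | untl : LTL AP → LTL AP → LTL AP

def LTL.sat {AP : Type} : LTL AP → (ℕ → Set AP) → Prop
  | .atom a, w => a ∈ w 0
  | .neg φ, w => ¬ φ.sat w
  | .disj φ ψ, w => φ.sat w ∨ ψ.sat w
  | .next φ, w => φ.sat (fun i => w (i + 1))
  | .untl φ ψ, w => ∃ j, ψ.sat (fun i => w (i + j)) ∧ ∀ j' < j, φ.sat (fun i => w (i + j'))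

/-- The temporal depth of an LTL formula. -/
def LTL.depth {AP : Type} : LTL AP → ℕ
  | .atom _ => 0
  | .neg φ => φ.depth
  | .disj φ ψ => max φ.depth ψ.depth
  | .next φ => 1 + φ.depth
  | .untl φ ψ => 1 + max φ.depth ψ.depth

/-- `w ∈ ∅^m a₀ ∅^n ∅* a₁ ∅^n ∅* a₂ ∅^n ∅* ⋯` : the letters `a i` occur in order
at positions `p i` with `p 0 = m`, with at least `n` empty letters between
consecutive occurrences, and all remaining positions are empty. -/
def SpacedWord {AP : Type} (m n : ℕ) (a : ℕ → Set AP) (w : ℕ → Set AP) : Prop :=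
  ∃ p : ℕ → ℕ, p 0 = m ∧ (∀ i, p i + n < p (i + 1)) ∧ (∀ i, w (p i) = a i) ∧
    ∀ j, (∀ i, j ≠ p i) → w j = ∅

namespace LTLSpacedAux

/-- EF-style relation between absolute positions `t₁` (in the word with letter
positions `p`) and `t₂` (letter positions `q`): there is a common "next letter
index" `i`, and the distances to it are either equal or both exceed `b`. -/
def Rel (p q : ℕ → ℕ) (b t₁ t₂ : ℕ) : Prop :=
  ∃ i, (∀ k, k < i → p k < t₁ ∧ q k < t₂) ∧ t₁ ≤ p i ∧ t₂ ≤ q i ∧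
    (p i - t₁ = q i - t₂ ∨ (b < p i - t₁ ∧ b < q i - t₂))

lemma Rel.symm {p q : ℕ → ℕ} {b t₁ t₂ : ℕ} (h : Rel p q b t₁ t₂) : Rel q p b t₂ t₁ := by
  obtain ⟨i, h1, h2, h3, h4⟩ := h
  exact ⟨i, fun k hk => ⟨(h1 k hk).2, (h1 k hk).1⟩, h3, h2, by omega⟩

lemma sat_congr {AP : Type} (φ : LTL AP) {w w' : ℕ → Set AP} (h : ∀ i, w i = w' i) :
    φ.sat w ↔ φ.sat w' := by
  have : w = w' := funext h
  rw [this]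

lemma exists_nxt (p : ℕ → ℕ) (hpm : StrictMono p) (u : ℕ) :
    ∃ ℓ, u ≤ p ℓ ∧ ∀ k, k < ℓ → p k < u := by
  have hle : ∀ m, m ≤ p m := by
    intro m
    induction m with
    | zero => exact Nat.zero_le _
    | succ k ih => exact Nat.succ_le_of_lt (lt_of_le_of_lt ih (hpm (Nat.lt_succ_self k)))
  have hex : ∃ ℓ, u ≤ p ℓ := ⟨u, hle u⟩
  exact ⟨Nat.find hex, Nat.find_spec hex, fun k hk => by
    have := Nat.find_min hex hk; omega⟩

lemma rel_succ (p q : ℕ → ℕ) (n c t₁ t₂ : ℕ) (hc : c + 1 ≤ n)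
    (hp : ∀ k, p k + n < p (k + 1)) (hq : ∀ k, q k + n < q (k + 1))
    (hR : Rel p q (c + 1) t₁ t₂) : Rel p q c (t₁ + 1) (t₂ + 1) := by
  obtain ⟨i, hlt, ht₁, ht₂, hor⟩ := hR
  have hpm : StrictMono p := strictMono_nat_of_lt_succ fun k => by have := hp k; omega
  have hqm : StrictMono q := strictMono_nat_of_lt_succ fun k => by have := hq k; omega
  by_cases h0 : t₁ = p i
  · have h1 : t₂ = q i := by rcases hor with h | h <;> omega
    refine ⟨i + 1, fun k hk => ?_, ?_, ?_, Or.inr ⟨?_, ?_⟩⟩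
    · exact ⟨by have := hpm.monotone (Nat.lt_succ_iff.mp hk); omega,
        by have := hqm.monotone (Nat.lt_succ_iff.mp hk); omega⟩
    · have := hp i; omega
    · have := hq i; omega
    · have := hp i; omega
    · have := hq i; omega
  · have h2 : t₁ < p i := by omega
    refine ⟨i, fun k hk => ⟨by have := (hlt k hk).1; omega, by have := (hlt k hk).2; omega⟩,
      by omega, by omega, by omega⟩

/-- Given a position `v` with next letter index `ℓ` (on the `q` side), find a
matching position `u'` on the `p` side, with a controlled shape. -/
lemma partner (p q : ℕ → ℕ) (n c i t₁ t₂ : ℕ) (hc : c + 1 ≤ n)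
    (hp : ∀ k, p k + n < p (k + 1)) (hq : ∀ k, q k + n < q (k + 1))
    (hlt : ∀ k, k < i → p k < t₁ ∧ q k < t₂) (ht₁ : t₁ ≤ p i) (ht₂ : t₂ ≤ q i)
    (hor : p i - t₁ = q i - t₂ ∨ (c + 1 < p i - t₁ ∧ c + 1 < q i - t₂))
    (v ℓ : ℕ) (hv : t₂ ≤ v) (hvℓ : v ≤ q ℓ) (hminq : ∀ k, k < ℓ → q k < v) (hi : i ≤ ℓ) :
    ∃ u', t₁ ≤ u' ∧ u' ≤ p ℓ ∧ Rel p q c u' v ∧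
      ((q ℓ - v ≤ c ∧ p ℓ - u' = q ℓ - v) ∨
       (c < q ℓ - v ∧ u' = if ℓ = i then t₁ else p (ℓ - 1) + 1)) := by
  have hpm : StrictMono p := strictMono_nat_of_lt_succ fun k => by have := hp k; omega
  rcases eq_or_lt_of_le hi with rfl | hi'
  · -- ℓ = i
    by_cases hr : q i - v ≤ c
    · have h1 : q i - v ≤ p i - t₁ := by rcases hor with h | h <;> omega
      refine ⟨p i - (q i - v), by omega, by omega,
        ⟨i, fun k hk => ⟨by have := (hlt k hk).1; omega, hminq k hk⟩, by omega, hvℓ, by omega⟩,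
        Or.inl ⟨hr, by omega⟩⟩
    · push_neg at hr
      have h1 : c < p i - t₁ := by rcases hor with h | h <;> omega
      refine ⟨t₁, le_rfl, ht₁,
        ⟨i, fun k hk => ⟨(hlt k hk).1, hminq k hk⟩, ht₁, hvℓ, Or.inr ⟨h1, hr⟩⟩,
        Or.inr ⟨hr, by simp⟩⟩
  · -- i < ℓ
    have hℓ1 : 1 ≤ ℓ := by omega
    have hgap : p (ℓ - 1) + n < p ℓ := by
      have := hp (ℓ - 1); rwa [Nat.sub_add_cancel hℓ1] at this
    have hple : p i ≤ p (ℓ - 1) := hpm.monotone (by omega)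
    have hpk : ∀ k, k < ℓ → p k ≤ p (ℓ - 1) := fun k hk => hpm.monotone (by omega)
    by_cases hr : q ℓ - v ≤ c
    · refine ⟨p ℓ - (q ℓ - v), by omega, by omega,
        ⟨ℓ, fun k hk => ⟨by have := hpk k hk; omega, hminq k hk⟩, by omega, hvℓ, by omega⟩,
        Or.inl ⟨hr, by omega⟩⟩
    · push_neg at hr
      refine ⟨p (ℓ - 1) + 1, by omega, by omega,
        ⟨ℓ, fun k hk => ⟨by have := hpk k hk; omega, hminq k hk⟩, by omega, hvℓ,
          Or.inr ⟨by omega, hr⟩⟩,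
        Or.inr ⟨hr, by rw [if_neg (by omega)]⟩⟩

/-- Key step for the until operator: for any position `u ≥ t₁`, there is a matching
position `v ≥ t₂`, such that every earlier position `v'` has an earlier match `u'`. -/
lemma key_step (p q : ℕ → ℕ) (n c t₁ t₂ : ℕ) (hc : c + 1 ≤ n)
    (hp : ∀ k, p k + n < p (k + 1)) (hq : ∀ k, q k + n < q (k + 1))
    (hR : Rel p q (c + 1) t₁ t₂) (u : ℕ) (hu : t₁ ≤ u) :
    ∃ v, t₂ ≤ v ∧ Rel p q c u v ∧
      ∀ v', t₂ ≤ v' → v' < v → ∃ u', t₁ ≤ u' ∧ u' < u ∧ Rel p q c u' v' := by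
  obtain ⟨i, hlt, ht₁, ht₂, hor⟩ := hR
  have hpm : StrictMono p := strictMono_nat_of_lt_succ fun k => by have := hp k; omega
  have hqm : StrictMono q := strictMono_nat_of_lt_succ fun k => by have := hq k; omega
  obtain ⟨ℓ, huℓ, hminp⟩ := exists_nxt p hpm u
  have hiℓ : i ≤ ℓ := by
    by_contra h
    push_neg at h
    have := (hlt ℓ h).1
    omega
  obtain ⟨v, hv₂, hvq, hRvu, hshape⟩ := partner q p n c i t₂ t₁ hc hq hp
    (fun k hk => ⟨(hlt k hk).2, (hlt k hk).1⟩) ht₂ ht₁ (by omega) u ℓ hu huℓ hminp hiℓ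
  refine ⟨v, hv₂, hRvu.symm, ?_⟩
  intro v' hv' hv'lt
  obtain ⟨ℓ', hvℓ', hminq'⟩ := exists_nxt q hqm v'
  have hiℓ' : i ≤ ℓ' := by
    by_contra h
    push_neg at h
    have := (hlt ℓ' h).2
    omega
  have hℓ'ℓ : ℓ' ≤ ℓ := by
    by_contra h
    push_neg at h
    have := hminq' ℓ h
    omega
  obtain ⟨u', hu't₁, hu'p, hRel', hshape'⟩ := partner p q n c i t₁ t₂ hc hp hq
    hlt ht₁ ht₂ hor v' ℓ' hv' hvℓ' hminq' hiℓ'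
  refine ⟨u', hu't₁, ?_, hRel'⟩
  rcases lt_or_eq_of_le hℓ'ℓ with hlt2 | rfl
  · -- ℓ' < ℓ
    have h3 : p (ℓ - 1) < u := hminp (ℓ - 1) (by omega)
    rcases hshape' with ⟨_, h4⟩ | ⟨_, h5⟩
    · have : p ℓ' ≤ p (ℓ - 1) := hpm.monotone (by omega)
      omega
    · by_cases h6 : ℓ' = i
      · rw [if_pos h6] at h5
        have : p i ≤ p (ℓ - 1) := hpm.monotone (by omega)
        omega
      · rw [if_neg h6] at h5
        have h7 : i < ℓ' := lt_of_le_of_ne hiℓ' (Ne.symm h6)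
        have : p (ℓ' - 1) < p (ℓ - 1) := hpm (by omega)
        omega
  · -- ℓ' = ℓ
    rcases hshape with ⟨hph1, hph2⟩ | ⟨_, hdeep⟩
    · -- the matched position v is in "phase" with u
      rcases hshape' with ⟨h4a, h4b⟩ | ⟨h5a, h5b⟩
      · omega
      · by_cases h6 : ℓ' = i
        · rw [if_pos h6] at h5b
          subst h6
          rcases hor with h | h <;> omega
        · rw [if_neg h6] at h5b
          have h7 : i < ℓ' := lt_of_le_of_ne hiℓ' (Ne.symm h6)
          have hgap : p (ℓ' - 1) + n < p ℓ' := by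
            have := hp (ℓ' - 1); rwa [Nat.sub_add_cancel (by omega)] at this
          omega
    · -- v deep: impossible to have v' underneath it
      exfalso
      by_cases h6 : ℓ' = i
      · rw [if_pos h6] at hdeep
        omega
      · rw [if_neg h6] at hdeep
        have h7 : i < ℓ' := lt_of_le_of_ne hiℓ' (Ne.symm h6)
        have h8 : q (ℓ' - 1) < v' := hminq' (ℓ' - 1) (by omega)
        omega

/-- One direction of the until transfer. -/
lemma until_transfer {AP : Type} (p q : ℕ → ℕ) (w₁ w₂ : ℕ → Set AP) (n c : ℕ)
    (hc : c + 1 ≤ n) (hp : ∀ k, p k + n < p (k + 1)) (hq : ∀ k, q k + n < q (k + 1))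
    (φ ψ : LTL AP)
    (ihφ : ∀ t₁ t₂, Rel p q c t₁ t₂ →
      (φ.sat (fun i => w₁ (i + t₁)) ↔ φ.sat (fun i => w₂ (i + t₂))))
    (ihψ : ∀ t₁ t₂, Rel p q c t₁ t₂ →
      (ψ.sat (fun i => w₁ (i + t₁)) ↔ ψ.sat (fun i => w₂ (i + t₂))))
    (t₁ t₂ : ℕ) (hR : Rel p q (c + 1) t₁ t₂)
    (h : (LTL.untl φ ψ).sat (fun i => w₁ (i + t₁))) :
    (LTL.untl φ ψ).sat (fun i => w₂ (i + t₂)) := by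
  simp only [LTL.sat] at h ⊢
  obtain ⟨j, hψj, hφj⟩ := h
  obtain ⟨v, hv, hRuv, hback⟩ := key_step p q n c t₁ t₂ hc hp hq hR (t₁ + j)
    (Nat.le_add_right _ _)
  refine ⟨v - t₂, ?_, ?_⟩
  · have h1 := (ihψ (t₁ + j) v hRuv).mp
      ((sat_congr ψ (fun i => congrArg w₁ (by omega))).mp hψj)
    exact (sat_congr ψ (fun i => congrArg w₂ (by omega : i + (v - t₂) + t₂ = i + v))).mpr h1
  · intro k' hk'
    obtain ⟨u', hu'1, hu'2, hRel'⟩ := hback (t₂ + k') (Nat.le_add_right _ _) (by omega)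
    have hj' : u' - t₁ < j := by omega
    have h2 := hφj (u' - t₁) hj'
    have h3 := (ihφ u' (t₂ + k') hRel').mp
      ((sat_congr φ (fun i => congrArg w₁ (by omega : i + (u' - t₁) + t₁ = i + u'))).mp h2)
    exact (sat_congr φ (fun i => congrArg w₂ (by omega : i + k' + t₂ = i + (t₂ + k')))).mpr h3

/-- Main induction: `Rel`-related positions satisfy the same formulas. -/
lemma main {AP : Type} (p q : ℕ → ℕ) (a w₁ w₂ : ℕ → Set AP) (n : ℕ)
    (hp : ∀ k, p k + n < p (k + 1)) (hq : ∀ k, q k + n < q (k + 1))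
    (hw₁ : ∀ i, w₁ (p i) = a i) (hw₁e : ∀ j, (∀ i, j ≠ p i) → w₁ j = ∅)
    (hw₂ : ∀ i, w₂ (q i) = a i) (hw₂e : ∀ j, (∀ i, j ≠ q i) → w₂ j = ∅)
    (φ : LTL AP) : ∀ (b t₁ t₂ : ℕ), φ.depth ≤ b → b ≤ n → Rel p q b t₁ t₂ →
      (φ.sat (fun i => w₁ (i + t₁)) ↔ φ.sat (fun i => w₂ (i + t₂))) := by
  induction φ with
  | atom x =>
    intro b t₁ t₂ hd hbn hR
    obtain ⟨i, hlt, ht₁, ht₂, hor⟩ := hR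
    have hpm : StrictMono p := strictMono_nat_of_lt_succ fun k => by have := hp k; omega
    have hqm : StrictMono q := strictMono_nat_of_lt_succ fun k => by have := hq k; omega
    have hw : w₁ t₁ = w₂ t₂ := by
      by_cases h0 : t₁ = p i
      · have h1 : t₂ = q i := by rcases hor with h | h <;> omega
        rw [h0, h1, hw₁ i, hw₂ i]
      · have h1 : t₁ < p i := by omega
        have h2 : t₂ < q i := by rcases hor with h | h <;> omega
        have hne1 : ∀ i', t₁ ≠ p i' := by
          intro i'
          rcases lt_or_ge i' i with h' | h'
          · have := (hlt i' h').1; omega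
          · have := hpm.monotone h'; omega
        have hne2 : ∀ i', t₂ ≠ q i' := by
          intro i'
          rcases lt_or_ge i' i with h' | h'
          · have := (hlt i' h').2; omega
          · have := hqm.monotone h'; omega
        rw [hw₁e t₁ hne1, hw₂e t₂ hne2]
    simp only [LTL.sat, Nat.zero_add, hw]
  | neg φ ih =>
    intro b t₁ t₂ hd hbn hR
    simp only [LTL.depth] at hd
    simp only [LTL.sat]
    exact not_congr (ih b t₁ t₂ hd hbn hR)
  | disj φ ψ ihφ ihψ =>
    intro b t₁ t₂ hd hbn hR
    simp only [LTL.depth, max_le_iff] at hd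
    simp only [LTL.sat]
    exact or_congr (ihφ b t₁ t₂ hd.1 hbn hR) (ihψ b t₁ t₂ hd.2 hbn hR)
  | next φ ih =>
    intro b t₁ t₂ hd hbn hR
    simp only [LTL.depth] at hd
    obtain ⟨c, rfl⟩ : ∃ c, b = c + 1 := ⟨b - 1, by omega⟩
    have hR' : Rel p q c (t₁ + 1) (t₂ + 1) := rel_succ p q n c t₁ t₂ hbn hp hq hR
    have hiff := ih c (t₁ + 1) (t₂ + 1) (by omega) (by omega) hR'
    simp only [LTL.sat]
    have e₁ : (fun i => w₁ (i + 1 + t₁)) = (fun i => w₁ (i + (t₁ + 1))) :=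
      funext fun i => congrArg w₁ (by omega)
    have e₂ : (fun i => w₂ (i + 1 + t₂)) = (fun i => w₂ (i + (t₂ + 1))) :=
      funext fun i => congrArg w₂ (by omega)
    rw [e₁, e₂]
    exact hiff
  | untl φ ψ ihφ ihψ =>
    intro b t₁ t₂ hd hbn hR
    simp only [LTL.depth, max_le_iff] at hd
    obtain ⟨c, rfl⟩ : ∃ c, b = c + 1 := ⟨b - 1, by omega⟩
    have ih1 : ∀ t₁' t₂', Rel p q c t₁' t₂' →
        (φ.sat (fun i => w₁ (i + t₁')) ↔ φ.sat (fun i => w₂ (i + t₂'))) :=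
      fun t₁' t₂' h => ihφ c t₁' t₂' (by omega) (by omega) h
    have ih2 : ∀ t₁' t₂', Rel p q c t₁' t₂' →
        (ψ.sat (fun i => w₁ (i + t₁')) ↔ ψ.sat (fun i => w₂ (i + t₂'))) :=
      fun t₁' t₂' h => ihψ c t₁' t₂' (by omega) (by omega) h
    constructor
    · exact until_transfer p q w₁ w₂ n c hbn hp hq φ ψ ih1 ih2 t₁ t₂ hR
    · exact until_transfer q p w₂ w₁ n c hbn hq hp φ ψ
        (fun t₂' t₁' h => (ih1 t₁' t₂' h.symm).symm)
        (fun t₂' t₁' h => (ih2 t₁' t₂' h.symm).symm) t₂ t₁ hR.symm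

end LTLSpacedAux

/-- **LTL cannot distinguish sufficiently spaced words**: two words with the same
sequence of non-empty letters, spaced at least `n` apart, satisfy the same LTL
formulas of temporal depth at most `n`. -/
theorem ltl_spaced_words_equivalent (AP : Type) [Fintype AP] (m n : ℕ)
    (a : ℕ → Set AP) (w₁ w₂ : ℕ → Set AP)
    (h₁ : SpacedWord m n a w₁) (h₂ : SpacedWord m n a w₂)
    (φ : LTL AP) (hd : φ.depth ≤ n) :
    φ.sat w₁ ↔ φ.sat w₂ := by
  obtain ⟨p, hp0, hpg, hpa, hpe⟩ := h₁
  obtain ⟨q, hq0, hqg, hqa, hqe⟩ := h₂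
  have hR : LTLSpacedAux.Rel p q n 0 0 :=
    ⟨0, fun k hk => by omega, Nat.zero_le _, Nat.zero_le _, Or.inl (by rw [hp0, hq0])⟩
  have h := LTLSpacedAux.main p q a w₁ w₂ n hpg hqg hpa hpe hqa hqe φ n 0 0 hd le_rfl hR
  have e₁ : (fun i => w₁ (i + 0)) = w₁ := funext fun i => by rw [Nat.add_zero]
  have e₂ : (fun i => w₂ (i + 0)) = w₂ := funext fun i => by rw [Nat.add_zero]
  rwa [e₁, e₂] at h
end

section
/- Let ψ be a quantifier-free HyperLTL formula over AP ∪ {o} with free variables among π₁,…,π_k, and let N = depth(ψ)+1. There exists a quantifier-free formula ψ~ with the same free variables, which is a Boolean combination of formulas of the form a_π (a ∈ AP ∪ {o}) and F(o_π ∧ F o_{π'}), such that for every set of traces T = enc(w,f) (w a finite word over 2^AP, f a stretch function) and every trace assignment Π into T: (T^{(N)}, Π^{(N)}) ⊨ ψ if and only if (T, Π) ⊨ ψ~, where T^{(N)} = enc(w, n ↦ N·(n+1)) and Π^{(N)} is the assignment obtained from Π by moving, in each assigned trace, the unique o-position f(i) to N·(i+1) while keeping the AP-label of the first position. -/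
/-- Boolean combinations of formulas of the form `a_π` and `F(o_π ∧ F o_π')`. -/
inductive SimpleQF {AP : Type} : QF (Option AP) → Prop where
  | atom (a : Option AP) (x : ℕ) : SimpleQF (.atom a x)
  | le (x y : ℕ) : SimpleQF (leHat x y)
  | neg {ψ} : SimpleQF ψ → SimpleQF (.neg ψ)
  | disj {ψ₁ ψ₂} : SimpleQF ψ₁ → SimpleQF ψ₂ → SimpleQF (.disj ψ₁ ψ₂)

/-- The temporal depth of a quantifier-free HyperLTL formula. -/
def QF.depth {AP : Type} : QF AP → ℕ
  | .atom _ _ => 0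
  | .neg ψ => ψ.depth
  | .disj ψ₁ ψ₂ => max ψ₁.depth ψ₂.depth
  | .next ψ => 1 + ψ.depth
  | .untl ψ₁ ψ₂ => 1 + max ψ₁.depth ψ₂.depth

/-!
Over the normalized stretch `i ↦ N * (i + 1)` the `o`-events of distinct word positions are at
least `N` apart, while a formula of temporal depth `< N` cannot measure distances of `N` or more.
An Ehrenfeucht–Fraïssé argument on pairs of positions that agree on which events are past and on
the distances, cut off at the depth, to the coming events shows that satisfaction only depends on
the letters of the assigned word positions and on their relative order. Over any encoding both are
expressed by the formulas `a_π` and `F(o_π ∧ F o_π')`, so `ψ` is equivalent to a Boolean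
combination of them.
-/

theorem shiftAsg_shiftAsg {α : Type} (As : ℕ → Trace α) (i j : ℕ) :
    shiftAsg (shiftAsg As j) i = shiftAsg As (j + i) := by
  funext x t
  simp only [shiftAsg, Trace.shift, Nat.add_assoc, Nat.add_comm i j]

theorem shiftAsg_zero {α : Type} (As : ℕ → Trace α) : shiftAsg As 0 = As :=
  rfl

namespace QF

variable {α : Type}

theorem freeVars_nonempty (ψ : QF α) : ψ.freeVars.Nonempty := by
  induction ψ with
  | atom a x => exact ⟨x, rfl⟩
  | neg _ ih | next _ ih => exact ih
  | disj _ _ ih _ | untl _ _ ih _ => exact ih.mono Set.subset_union_left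

theorem sat_congr (ψ : QF α) {As₁ As₂ : ℕ → Trace α}
    (h : ∀ x ∈ ψ.freeVars, As₁ x = As₂ x) : ψ.sat As₁ ↔ ψ.sat As₂ := by
  induction ψ generalizing As₁ As₂ with
  | atom a x => simp only [sat, h x rfl]
  | neg ψ ih => exact not_congr (ih h)
  | disj ψ₁ ψ₂ ih₁ ih₂ =>
    exact or_congr (ih₁ fun x hx => h x (.inl hx)) (ih₂ fun x hx => h x (.inr hx))
  | next ψ ih => exact ih fun x hx => by simp only [shiftAsg, h x hx]
  | untl ψ₁ ψ₂ ih₁ ih₂ =>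
    refine exists_congr fun j => and_congr ?_ (forall₂_congr fun j' _ => ?_)
    · exact ih₂ fun x hx => by simp only [shiftAsg, h x (.inr hx)]
    · exact ih₁ fun x hx => by simp only [shiftAsg, h x (.inl hx)]

theorem sat_conj (ψ₁ ψ₂ : QF α) (As : ℕ → Trace α) :
    (conj ψ₁ ψ₂).sat As ↔ ψ₁.sat As ∧ ψ₂.sat As := by
  simp only [conj, sat, not_or, not_not]

theorem sat_ev (ψ : QF α) (As : ℕ → Trace α) :
    ψ.ev.sat As ↔ ∃ j, ψ.sat (shiftAsg As j) :=
  ⟨fun ⟨j, hj, _⟩ => ⟨j, hj⟩, fun ⟨j, hj⟩ => ⟨j, hj, fun _ _ => em _⟩⟩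

theorem sat_next_shiftAsg (ψ : QF α) (As : ℕ → Trace α) (j : ℕ) :
    (next ψ).sat (shiftAsg As j) ↔ ψ.sat (shiftAsg As (j + 1)) := by
  rw [sat, shiftAsg_shiftAsg]

theorem sat_untl_shiftAsg (ψ₁ ψ₂ : QF α) (As : ℕ → Trace α) (j : ℕ) :
    (untl ψ₁ ψ₂).sat (shiftAsg As j) ↔
      ∃ P, j ≤ P ∧ ψ₂.sat (shiftAsg As P) ∧ ∀ Q, j ≤ Q → Q < P → ψ₁.sat (shiftAsg As Q) := by
  simp only [sat, shiftAsg_shiftAsg]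
  constructor
  · rintro ⟨i, h₂, h₁⟩
    refine ⟨j + i, by omega, h₂, fun Q hjQ hQ => ?_⟩
    simpa only [Nat.add_sub_cancel' hjQ] using h₁ (Q - j) (by omega)
  · rintro ⟨P, hjP, h₂, h₁⟩
    exact ⟨P - j, by rwa [Nat.add_sub_cancel' hjP], fun i hi => h₁ _ (by omega) (by omega)⟩

end QF

section Encoding

variable {AP : Type} (w : FinWord AP) (f : ℕ → ℕ)

theorem mem_encTrace_some (m i : ℕ) (a : AP) :
    some a ∈ encTrace w f m i ↔ i = 0 ∧ a ∈ w.letter m := by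
  simp [encTrace]

theorem mem_encTrace_none (m i : ℕ) : (none : Option AP) ∈ encTrace w f m i ↔ i = f m := by
  simp [encTrace]

theorem sat_atom_encTrace (n : ℕ → ℕ) (x : ℕ) (a : AP) :
    (QF.atom (some a) x).sat (fun z => encTrace w f (n z)) ↔ a ∈ w.letter (n x) := by
  simp [QF.sat, mem_encTrace_some]

theorem sat_leHat_encTrace {f} (hf : StrictMono f) (n : ℕ → ℕ) (x y : ℕ) :
    (leHat x y).sat (fun z => encTrace w f (n z)) ↔ n x ≤ n y := by
  simp only [leHat, QF.sat_ev, QF.sat_conj, QF.sat, shiftAsg, Trace.shift,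
    mem_encTrace_none, zero_add]
  rw [← hf.le_iff_le]
  constructor
  · rintro ⟨j, hj, i, hi⟩
    omega
  · intro hxy
    exact ⟨f (n x), rfl, f (n y) - f (n x), by omega⟩

end Encoding

section Timeline

/-- `u x` is the position of the `o`-event on the trace assigned to the variable `x`. -/
structure IsSparse (N : ℕ) (u : ℕ → ℕ) : Prop where
  le_apply : ∀ x, N ≤ u x
  add_le_of_lt : ∀ x y, u x < u y → u x + N ≤ u y

structure Aligned (N : ℕ) (u₁ u₂ : ℕ → ℕ) : Prop where
  le_iff_le : ∀ x y, u₁ x ≤ u₁ y ↔ u₂ x ≤ u₂ y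
  sparse_left : IsSparse N u₁
  sparse_right : IsSparse N u₂

/-- Position `Q` of the first timeline and `Q'` of the second look alike up to distance `d`:
each event lies in the past of both, or at the same distance from both, where all distances
beyond `d` are identified. -/
def Matched (u₁ u₂ : ℕ → ℕ) (d Q Q' : ℕ) : Prop :=
  (Q = 0 ↔ Q' = 0) ∧
    ∀ x, (u₁ x < Q ↔ u₂ x < Q') ∧ min (u₁ x - Q) (d + 1) = min (u₂ x - Q') (d + 1)

variable {N d e j j' P Q Q' : ℕ} {u₁ u₂ : ℕ → ℕ}

theorem Aligned.symm (hu : Aligned N u₁ u₂) : Aligned N u₂ u₁ :=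
  ⟨fun x y => (hu.le_iff_le x y).symm, hu.sparse_right, hu.sparse_left⟩

theorem Aligned.lt_iff_lt (hu : Aligned N u₁ u₂) (x y : ℕ) : u₁ x < u₁ y ↔ u₂ x < u₂ y :=
  lt_iff_lt_of_le_iff_le (hu.le_iff_le y x)

theorem Aligned.eq_iff_eq (hu : Aligned N u₁ u₂) (x y : ℕ) : u₁ x = u₁ y ↔ u₂ x = u₂ y := by
  rw [le_antisymm_iff, le_antisymm_iff, hu.le_iff_le, hu.le_iff_le]

theorem Matched.symm (h : Matched u₁ u₂ d Q Q') : Matched u₂ u₁ d Q' Q :=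
  ⟨h.1.symm, fun x => ⟨(h.2 x).1.symm, (h.2 x).2.symm⟩⟩

theorem Matched.mono (h : Matched u₁ u₂ d Q Q') (hed : e ≤ d) : Matched u₁ u₂ e Q Q' := by
  refine ⟨h.1, fun x => ⟨(h.2 x).1, ?_⟩⟩
  have := (h.2 x).2
  omega

theorem Matched.succ (h : Matched u₁ u₂ (d + 1) Q Q') : Matched u₁ u₂ d (Q + 1) (Q' + 1) := by
  refine ⟨by omega, fun x => ?_⟩
  have := h.2 x
  omega

theorem Matched.apply_eq_iff (h : Matched u₁ u₂ d Q Q') (x : ℕ) : u₁ x = Q ↔ u₂ x = Q' := by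
  have := h.2 x
  omega

theorem matched_zero_zero (hu : Aligned N u₁ u₂) (hd : d < N) : Matched u₁ u₂ d 0 0 := by
  refine ⟨Iff.rfl, fun x => ?_⟩
  have := hu.sparse_left.le_apply x
  have := hu.sparse_right.le_apply x
  omega

theorem exists_min_image_nat (u : ℕ → ℕ) {p : ℕ → Prop} (h : ∃ x, p x) :
    ∃ w, p w ∧ ∀ x, p x → u w ≤ u x := by
  obtain ⟨w, hw, hmin⟩ := (InvImage.wf u wellFounded_lt).has_min {x | p x} h
  exact ⟨w, hw, fun x hx => not_lt.mp (hmin x hx)⟩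

/-- The position of the second timeline corresponding to the cut of the first timeline before
`P`: just after the last event before `P`, or `1` if there is none. -/
theorem Aligned.exists_cut (hu : Aligned N u₁ u₂) (hN : 0 < N) (P : ℕ) :
    ∃ b, 0 < b ∧ (∀ x, u₁ x < P ↔ u₂ x < b) ∧ (∀ x, b ≤ u₂ x → b + (N - 1) ≤ u₂ x) ∧
      ∀ Q', 0 < Q' → Q' < b → ∃ x, Q' ≤ u₂ x ∧ u₂ x < b := by
  by_cases hpast : ∃ x, u₁ x < P
  · obtain ⟨z, hzP, hz⟩ := exists_min_image_nat (fun x => P - u₁ x) hpast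
    have hlast : ∀ x, u₁ x < P ↔ u₁ x ≤ u₁ z := fun x =>
      ⟨fun hx => by have := hz x hx; omega, fun hx => by omega⟩
    refine ⟨u₂ z + 1, by omega, fun x => ?_, fun x hx => ?_,
      fun Q' _ hQ' => ⟨z, by omega, by omega⟩⟩
    · rw [hlast, hu.le_iff_le]
      omega
    · have := hu.sparse_right.add_le_of_lt z x (by omega)
      omega
  · refine ⟨1, one_pos, fun x => ?_, fun x _ => ?_, fun Q' h₀ h₁ => absurd h₁ (by omega)⟩
    · have := hu.sparse_right.le_apply x
      exact iff_of_false (fun h => hpast ⟨x, h⟩) (by omega)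
    · have := hu.sparse_right.le_apply x
      omega

/-- The partner of `Q'` is read off from the first event `w` at or after `Q'`: it lies at the
same distance before `w`, with distances beyond `e` cut down to `e + 1`. -/
theorem Matched.partner_of_first_event (hu : Aligned N u₁ u₂) (he : e + 2 ≤ N)
    (h : Matched u₁ u₂ (e + 1) j j') (hQ' : j' < Q') {w : ℕ} (hw : Q' ≤ u₂ w)
    (hmin : ∀ x, Q' ≤ u₂ x → u₂ w ≤ u₂ x) :
    j < u₁ w - min (u₂ w - Q') (e + 1) ∧
      Matched u₁ u₂ e (u₁ w - min (u₂ w - Q') (e + 1)) Q' := by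
  have := hu.sparse_left.le_apply w
  have := h.2 w
  refine ⟨by omega, by omega, fun x => ?_⟩
  rcases lt_trichotomy (u₂ x) (u₂ w) with hlt | heq | hgt
  · have := hu.sparse_left.add_le_of_lt x w ((hu.lt_iff_lt x w).mpr hlt)
    have : u₂ x < Q' := not_le.mp fun hx => (hmin x hx).not_gt hlt
    omega
  · have := (hu.eq_iff_eq x w).mpr heq
    omega
  · have := hu.sparse_left.add_le_of_lt w x ((hu.lt_iff_lt w x).mpr hgt)
    have := hu.sparse_right.add_le_of_lt w x hgt
    omega

theorem Matched.exists_until_witness_of_near (hu : Aligned N u₁ u₂) (he : e + 2 ≤ N)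
    (h : Matched u₁ u₂ (e + 1) j j') (hjP : j < P) {y : ℕ} (hy : P ≤ u₁ y)
    (hyP : u₁ y ≤ P + e) (hmin : ∀ x, P ≤ u₁ x → u₁ y ≤ u₁ x) :
    ∃ P', j' ≤ P' ∧ Matched u₁ u₂ e P P' ∧
      ∀ Q', j' ≤ Q' → Q' < P' → ∃ Q, j ≤ Q ∧ Q < P ∧ Matched u₁ u₂ e Q Q' := by
  obtain ⟨hjP', hPP'⟩ := h.symm.partner_of_first_event hu.symm he hjP hy hmin
  refine ⟨_, hjP'.le, hPP'.symm, fun Q' hjQ' hQ'P' => ?_⟩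
  rcases hjQ'.eq_or_lt with rfl | hjQ'
  · exact ⟨j, le_rfl, hjP, h.mono (by omega)⟩
  obtain ⟨w, hw, hwmin⟩ := exists_min_image_nat u₂ (p := fun x => Q' ≤ u₂ x) ⟨y, by omega⟩
  obtain ⟨hjQ, hQQ'⟩ := h.partner_of_first_event hu he hjQ' hw hwmin
  refine ⟨_, hjQ.le, ?_, hQQ'⟩
  rcases (hwmin y (by omega)).lt_or_eq with hlt | heq
  · have := hu.sparse_left.add_le_of_lt w y ((hu.lt_iff_lt w y).mpr hlt)
    omega
  · have := (hu.eq_iff_eq w y).mpr heq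
    omega

/-- Far from the next event, the witness is the first position of the second timeline that
is not before `j'` and has the same past as `P`. -/
theorem Matched.exists_until_witness_of_far (hu : Aligned N u₁ u₂) (he : e + 2 ≤ N)
    (h : Matched u₁ u₂ (e + 1) j j') (hjP : j < P) (hfar : ∀ x, P ≤ u₁ x → P + e < u₁ x) :
    ∃ P', j' ≤ P' ∧ Matched u₁ u₂ e P P' ∧
      ∀ Q', j' ≤ Q' → Q' < P' → ∃ Q, j ≤ Q ∧ Q < P ∧ Matched u₁ u₂ e Q Q' := by
  obtain ⟨b, hb, hcut, hgap, hbefore⟩ := hu.exists_cut (by omega) P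
  refine ⟨max j' b, le_max_left _ _, ⟨by omega, fun x => ?_⟩, fun Q' hjQ' hQ'P' => ?_⟩
  · have := h.2 x
    have := hcut x
    have := hgap x
    have := hfar x
    omega
  rcases hjQ'.eq_or_lt with rfl | hjQ'
  · exact ⟨j, le_rfl, hjP, h.mono (by omega)⟩
  obtain ⟨x, hQ'x, hxb⟩ := hbefore Q' (by omega) (by omega)
  obtain ⟨w, hw, hwmin⟩ := exists_min_image_nat u₂ (p := fun x => Q' ≤ u₂ x) ⟨x, hQ'x⟩
  obtain ⟨hjQ, hQQ'⟩ := h.partner_of_first_event hu he hjQ' hw hwmin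
  have := (hcut w).mpr (by have := hwmin x hQ'x; omega)
  exact ⟨_, hjQ.le, by omega, hQQ'⟩

theorem Matched.exists_until_witness (hu : Aligned N u₁ u₂) (he : e + 2 ≤ N)
    (h : Matched u₁ u₂ (e + 1) j j') (hjP : j ≤ P) :
    ∃ P', j' ≤ P' ∧ Matched u₁ u₂ e P P' ∧
      ∀ Q', j' ≤ Q' → Q' < P' → ∃ Q, j ≤ Q ∧ Q < P ∧ Matched u₁ u₂ e Q Q' := by
  rcases hjP.eq_or_lt with rfl | hjP
  · exact ⟨j', le_rfl, h.mono (by omega), fun Q' h₁ h₂ => absurd h₂ (by omega)⟩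
  by_cases hnear : ∃ y, P ≤ u₁ y ∧ u₁ y ≤ P + e ∧ ∀ x, P ≤ u₁ x → u₁ y ≤ u₁ x
  · obtain ⟨y, hy, hyP, hmin⟩ := hnear
    exact h.exists_until_witness_of_near hu he hjP hy hyP hmin
  refine h.exists_until_witness_of_far hu he hjP fun x hx => ?_
  obtain ⟨y, hy, hmin⟩ := exists_min_image_nat u₁ (p := fun x => P ≤ u₁ x) ⟨x, hx⟩
  have := hmin x hx
  by_contra
  exact hnear ⟨y, hy, by omega, hmin⟩

end Timeline

section Transfer

variable {α : Type} {N : ℕ} {u₁ u₂ : ℕ → ℕ} {As₁ As₂ : ℕ → Trace α}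

theorem Matched.sat_untl (hu : Aligned N u₁ u₂) {e j j' : ℕ} (he : e + 2 ≤ N)
    {ψ₁ ψ₂ : QF α}
    (ih₁ : ∀ Q Q', Matched u₁ u₂ e Q Q' → ψ₁.sat (shiftAsg As₁ Q) → ψ₁.sat (shiftAsg As₂ Q'))
    (ih₂ : ∀ Q Q', Matched u₁ u₂ e Q Q' → ψ₂.sat (shiftAsg As₁ Q) → ψ₂.sat (shiftAsg As₂ Q'))
    (h : Matched u₁ u₂ (e + 1) j j') :
    (QF.untl ψ₁ ψ₂).sat (shiftAsg As₁ j) → (QF.untl ψ₁ ψ₂).sat (shiftAsg As₂ j') := by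
  simp only [QF.sat_untl_shiftAsg]
  rintro ⟨P, hjP, h₂, h₁⟩
  obtain ⟨P', hjP', hPP', hback⟩ := h.exists_until_witness hu he hjP
  refine ⟨P', hjP', ih₂ P P' hPP' h₂, fun Q' hjQ' hQ'P' => ?_⟩
  obtain ⟨Q, hjQ, hQP, hQQ'⟩ := hback Q' hjQ' hQ'P'
  exact ih₁ Q Q' hQQ' (h₁ Q hjQ hQP)

theorem Matched.sat_iff (hu : Aligned N u₁ u₂)
    (hatom : ∀ a x j j', Matched u₁ u₂ 0 j j' → (a ∈ As₁ x j ↔ a ∈ As₂ x j'))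
    (ψ : QF α) {d j j' : ℕ} (hd : ψ.depth ≤ d) (hdN : d < N) (h : Matched u₁ u₂ d j j') :
    ψ.sat (shiftAsg As₁ j) ↔ ψ.sat (shiftAsg As₂ j') := by
  induction ψ generalizing d j j' with
  | atom a x =>
    simpa only [QF.sat, shiftAsg, Trace.shift, zero_add] using
      hatom a x j j' (h.mono (Nat.zero_le d))
  | neg ψ ih => exact not_congr (ih hd hdN h)
  | disj ψ₁ ψ₂ ih₁ ih₂ =>
    simp only [QF.depth, max_le_iff] at hd
    exact or_congr (ih₁ hd.1 hdN h) (ih₂ hd.2 hdN h)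
  | next ψ ih =>
    simp only [QF.depth] at hd
    obtain ⟨e, rfl⟩ : ∃ e, d = e + 1 := ⟨d - 1, by omega⟩
    rw [QF.sat_next_shiftAsg, QF.sat_next_shiftAsg]
    exact ih (by omega) (by omega) h.succ
  | untl ψ₁ ψ₂ ih₁ ih₂ =>
    simp only [QF.depth] at hd
    obtain ⟨e, rfl⟩ : ∃ e, d = e + 1 := ⟨d - 1, by omega⟩
    have ih₁ := fun Q Q' (hQ : Matched u₁ u₂ e Q Q') => ih₁ (by omega) (by omega) hQ
    have ih₂ := fun Q Q' (hQ : Matched u₁ u₂ e Q Q') => ih₂ (by omega) (by omega) hQ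
    exact ⟨h.sat_untl hu (by omega) (fun Q Q' hQ => (ih₁ Q Q' hQ).mp)
        (fun Q Q' hQ => (ih₂ Q Q' hQ).mp),
      h.symm.sat_untl hu.symm (by omega) (fun Q Q' hQ => (ih₁ Q' Q hQ.symm).mpr)
        (fun Q Q' hQ => (ih₂ Q' Q hQ.symm).mpr)⟩

end Transfer

section Normalized

variable {AP : Type} {N : ℕ}

theorem isSparse_mul_succ (n : ℕ → ℕ) : IsSparse N fun x => N * (n x + 1) where
  le_apply x := Nat.le_mul_of_pos_right N (Nat.succ_pos _)
  add_le_of_lt x y h := by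
    have : n x < n y := by
      by_contra hle
      exact h.not_ge (Nat.mul_le_mul_left N (by omega))
    calc N * (n x + 1) + N = N * (n x + 2) := by ring
      _ ≤ N * (n y + 1) := Nat.mul_le_mul_left N (by omega)

theorem aligned_mul_succ (hN : 0 < N) {n₁ n₂ : ℕ → ℕ}
    (hord : ∀ x y, n₁ x ≤ n₁ y ↔ n₂ x ≤ n₂ y) :
    Aligned N (fun x => N * (n₁ x + 1)) (fun x => N * (n₂ x + 1)) where
  le_iff_le x y := by
    simp only [Nat.mul_le_mul_left_iff hN, Nat.add_le_add_iff_right, hord]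
  sparse_left := isSparse_mul_succ n₁
  sparse_right := isSparse_mul_succ n₂

theorem sat_encTrace_mul_succ_iff (ψ : QF (Option AP)) (hN : ψ.depth < N)
    {w₁ w₂ : FinWord AP} {n₁ n₂ : ℕ → ℕ}
    (hlet : ∀ x ∈ ψ.freeVars, w₁.letter (n₁ x) = w₂.letter (n₂ x))
    (hord : ∀ x ∈ ψ.freeVars, ∀ y ∈ ψ.freeVars, n₁ x ≤ n₁ y ↔ n₂ x ≤ n₂ y) :
    ψ.sat (fun x => encTrace w₁ (fun i => N * (i + 1)) (n₁ x)) ↔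
      ψ.sat (fun x => encTrace w₂ (fun i => N * (i + 1)) (n₂ x)) := by
  classical
  -- `Aligned` constrains all variables: redirect those outside `ψ.freeVars` to `x₀`
  obtain ⟨x₀, hx₀⟩ := ψ.freeVars_nonempty
  let r x := if x ∈ ψ.freeVars then x else x₀
  have hr : ∀ x, r x ∈ ψ.freeVars := fun x => by by_cases hx : x ∈ ψ.freeVars <;> simp [r, hx, hx₀]
  have hrr : ∀ x ∈ ψ.freeVars, r x = x := fun x hx => if_pos hx
  have hu := aligned_mul_succ (N := N) (by omega) (n₁ := fun x => n₁ (r x))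
    (n₂ := fun x => n₂ (r x)) fun x y => hord _ (hr x) _ (hr y)
  have key := Matched.sat_iff hu (As₁ := fun x => encTrace w₁ (fun i => N * (i + 1)) (n₁ (r x)))
    (As₂ := fun x => encTrace w₂ (fun i => N * (i + 1)) (n₂ (r x))) ?_ ψ le_rfl hN
    (matched_zero_zero hu hN)
  · simp only [shiftAsg_zero] at key
    calc _ ↔ _ := ψ.sat_congr fun x hx => by simp only [hrr x hx]
      _ ↔ _ := key
      _ ↔ _ := ψ.sat_congr fun x hx => by simp only [hrr x hx]
  · rintro (_ | a) x j j' h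
    · simpa only [mem_encTrace_none, eq_comm] using h.apply_eq_iff x
    · rw [mem_encTrace_some, mem_encTrace_some, hlet _ (hr x), h.1]

end Normalized

section BooleanCombination

variable {α : Type}

inductive IsBoolComb (G : Set (QF α)) : QF α → Prop
  | of_mem {φ} : φ ∈ G → IsBoolComb G φ
  | neg {φ} : IsBoolComb G φ → IsBoolComb G (.neg φ)
  | disj {φ₁ φ₂} : IsBoolComb G φ₁ → IsBoolComb G φ₂ → IsBoolComb G (.disj φ₁ φ₂)

variable {G : Set (QF α)} {φ : QF α}

theorem IsBoolComb.conj {φ₁ φ₂ : QF α} (h₁ : IsBoolComb G φ₁) (h₂ : IsBoolComb G φ₂) :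
    IsBoolComb G (φ₁.conj φ₂) :=
  .neg (.disj h₁.neg h₂.neg)

theorem IsBoolComb.simpleQF {AP : Type} {G : Set (QF (Option AP))} {φ : QF (Option AP)}
    (h : IsBoolComb G φ) (hG : ∀ ℓ ∈ G, SimpleQF ℓ) : SimpleQF φ := by
  induction h with
  | of_mem hφ => exact hG _ hφ
  | neg _ ih => exact .neg ih
  | disj _ _ ih₁ ih₂ => exact .disj ih₁ ih₂

theorem IsBoolComb.freeVars_subset {S : Set ℕ} (h : IsBoolComb G φ)
    (hG : ∀ ℓ ∈ G, ℓ.freeVars ⊆ S) : φ.freeVars ⊆ S := by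
  induction h with
  | of_mem hφ => exact hG _ hφ
  | neg _ ih => exact ih
  | disj _ _ ih₁ ih₂ => exact Set.union_subset ih₁ ih₂

/-- The formula `φ₀` only provides the constants `⊤` and `⊥`. -/
theorem exists_isBoolComb_sat_iff {ι : Type*} {φ₀ : QF α} (h₀ : φ₀ ∈ G)
    (A : ι → ℕ → Trace α) (Φ : ι → Prop) (L : List (QF α)) (hL : ∀ ℓ ∈ L, ℓ ∈ G)
    (C : ι → Prop)
    (hΦ : ∀ i j, C i → C j → (∀ ℓ ∈ L, ℓ.sat (A i) ↔ ℓ.sat (A j)) → (Φ i ↔ Φ j)) :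
    ∃ χ, IsBoolComb G χ ∧ ∀ i, C i → (Φ i ↔ χ.sat (A i)) := by
  induction L generalizing C with
  | nil =>
    have htop : IsBoolComb G (.disj φ₀ (.neg φ₀)) := .disj (.of_mem h₀) (IsBoolComb.of_mem h₀).neg
    by_cases hex : ∃ i, C i ∧ Φ i
    · obtain ⟨i₀, hC₀, hΦ₀⟩ := hex
      exact ⟨_, htop, fun i hi => iff_of_true ((hΦ i₀ i hC₀ hi (by simp)).mp hΦ₀) (em _)⟩
    · exact ⟨_, htop.neg, fun i hi => iff_of_false (fun hΦi => hex ⟨i, hi, hΦi⟩) (· (em _))⟩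
  | cons ℓ L ih =>
    -- Shannon expansion along `ℓ`
    have hℓ : IsBoolComb G ℓ := .of_mem (hL ℓ List.mem_cons_self)
    have hL' : ∀ ℓ' ∈ L, ℓ' ∈ G := fun ℓ' h => hL ℓ' (List.mem_cons_of_mem _ h)
    obtain ⟨χ₁, hχ₁, h₁⟩ := ih hL' (fun i => C i ∧ ℓ.sat (A i)) fun i j hi hj h =>
      hΦ i j hi.1 hj.1 (List.forall_mem_cons.2 ⟨iff_of_true hi.2 hj.2, h⟩)
    obtain ⟨χ₂, hχ₂, h₂⟩ := ih hL' (fun i => C i ∧ ¬ ℓ.sat (A i)) fun i j hi hj h =>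
      hΦ i j hi.1 hj.1 (List.forall_mem_cons.2 ⟨iff_of_false hi.2 hj.2, h⟩)
    refine ⟨.disj (ℓ.conj χ₁) (ℓ.neg.conj χ₂), .disj (hℓ.conj hχ₁) (hℓ.neg.conj hχ₂),
      fun i hi => ?_⟩
    by_cases hℓi : ℓ.sat (A i)
    · simp [QF.sat, QF.sat_conj, hℓi, h₁ i ⟨hi, hℓi⟩]
    · simp [QF.sat, QF.sat_conj, hℓi, h₂ i ⟨hi, hℓi⟩]

end BooleanCombination

section Literals

variable {AP : Type} [Fintype AP] {k : ℕ}

noncomputable def literals (AP : Type) [Fintype AP] (k : ℕ) : List (QF (Option AP)) :=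
  (List.range k).flatMap fun x =>
    (Finset.univ.toList.map fun a => QF.atom (some a) x) ++ (List.range k).map (leHat x)

theorem mem_literals {ℓ : QF (Option AP)} :
    ℓ ∈ literals AP k ↔ ∃ x < k, (∃ a, ℓ = .atom (some a) x) ∨ ∃ y < k, ℓ = leHat x y := by
  simp [literals, eq_comm]

theorem simpleQF_of_mem_literals {ℓ : QF (Option AP)} (h : ℓ ∈ literals AP k) : SimpleQF ℓ := by
  obtain ⟨x, -, ⟨a, rfl⟩ | ⟨y, -, rfl⟩⟩ := mem_literals.1 h
  · exact .atom _ x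
  · exact .le x y

theorem freeVars_subset_of_mem_literals {ℓ : QF (Option AP)} (h : ℓ ∈ literals AP k) :
    ℓ.freeVars ⊆ {x | x < k} := by
  obtain ⟨x, hx, ⟨a, rfl⟩ | ⟨y, hy, rfl⟩⟩ := mem_literals.1 h
  · simpa [QF.freeVars] using hx
  · simp [leHat, QF.ev, QF.conj, QF.freeVars, Set.subset_def, hx, hy]

theorem sat_encTrace_mul_succ_iff_of_literals {ψ : QF (Option AP)}
    (hfree : ψ.freeVars ⊆ {x | x < k}) {N : ℕ} (hN : ψ.depth < N) {w₁ w₂ : FinWord AP}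
    {f₁ f₂ : ℕ → ℕ} (hf₁ : StrictMono f₁) (hf₂ : StrictMono f₂) {n₁ n₂ : ℕ → ℕ}
    (hL : ∀ ℓ ∈ literals AP k, ℓ.sat (fun x => encTrace w₁ f₁ (n₁ x)) ↔
      ℓ.sat (fun x => encTrace w₂ f₂ (n₂ x))) :
    ψ.sat (fun x => encTrace w₁ (fun i => N * (i + 1)) (n₁ x)) ↔
      ψ.sat (fun x => encTrace w₂ (fun i => N * (i + 1)) (n₂ x)) := by
  refine sat_encTrace_mul_succ_iff ψ hN (fun x hx => Set.ext fun a => ?_) fun x hx y hy => ?_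
  · simpa only [sat_atom_encTrace] using
      hL _ (mem_literals.2 ⟨x, hfree hx, .inl ⟨a, rfl⟩⟩)
  · simpa only [sat_leHat_encTrace _ hf₁, sat_leHat_encTrace _ hf₂] using
      hL _ (mem_literals.2 ⟨x, hfree hx, .inr ⟨y, hfree hy, rfl⟩⟩)

end Literals

/-- **Flattening quantifier-free formulas over word encodings**: for every
quantifier-free `ψ` with free variables among `π₁, …, π_k` and `N = depth(ψ)+1`,
there is a Boolean combination `ψ~` of formulas `a_π` and `F(o_π ∧ F o_π')` such
that for all `T = enc(w, f)` and assignments `Π` into `T`: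
`(T^(N), Π^(N)) ⊨ ψ` iff `(T, Π) ⊨ ψ~`. -/
theorem qf_simplification (AP : Type) [Fintype AP] (ψ : QF (Option AP)) (k : ℕ)
    (hfree : ψ.freeVars ⊆ {x | x < k}) :
    ∃ ψt : QF (Option AP), SimpleQF ψt ∧ ψt.freeVars ⊆ {x | x < k} ∧
      ∀ (w : FinWord AP) (f : ℕ → ℕ), IsStretch f →
        ∀ As As' : ℕ → Trace (Option AP),
          (∀ x, ∃ n, n < w.len ∧ As x = encTrace w f n ∧
            As' x = encTrace w (fun i => (ψ.depth + 1) * (i + 1)) n) →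
          (ψ.sat As' ↔ ψt.sat As) := by
  obtain ⟨x₀, hx₀⟩ := ψ.freeVars_nonempty
  obtain ⟨ψt, hψt, hsat⟩ := exists_isBoolComb_sat_iff (G := {ℓ | ℓ ∈ literals AP k})
    (mem_literals.2 ⟨x₀, hfree hx₀, .inr ⟨x₀, hfree hx₀, rfl⟩⟩)
    (fun (i : FinWord AP × (ℕ → ℕ) × (ℕ → ℕ)) x => encTrace i.1 i.2.1 (i.2.2 x))
    (fun i => ψ.sat fun x => encTrace i.1 (fun m => (ψ.depth + 1) * (m + 1)) (i.2.2 x))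
    (literals AP k) (fun _ h => h) (fun i => StrictMono i.2.1)
    fun i j hi hj hL => sat_encTrace_mul_succ_iff_of_literals hfree (Nat.lt_succ_self _) hi hj hL
  refine ⟨ψt, hψt.simpleQF fun _ => simpleQF_of_mem_literals,
    hψt.freeVars_subset fun _ => freeVars_subset_of_mem_literals, fun w f hf As As' hAs => ?_⟩
  choose n _ hAs hAs' using hAs
  rw [funext hAs, funext hAs']
  exact hsat (w, f, n) hf.1
end
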